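/- arXiv:2107.14170 — 6 statements merged into one kernel-verified Lean document; each statement's English description precedes it below -/
import Mathlib

section
/- Let R > 0, b > 1, c ≥ 0 and K1 ≥ 0. Suppose the complex power series f(z) = Σ_{n≥0} a_n z^n converges for all z ∈ ℂ with |z| < R, and that |f(z)| ≤ K1 / (|1 − z/R|^b (1 − |z|/R)^c) for all z ∈ ℂ with |z| < R. Then there exists K2 > 0 depending only on b and c such that |a_n| ≤ K1 K2 n^{b+c−1} R^{−n} for all n ≥ 1. -/
open scoped BigOperators

open Real

lemma lemB {ρ θ : ℝ} (h0 : 0 ≤ ρ) (h1 : ρ < 1) (hθ : |θ| ≤ π) :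
    (1 - ρ) + |θ| / π ≤ 4 * ‖1 - (ρ : ℂ) * Complex.exp (θ * Complex.I)‖ := by
  set N : ℝ := ‖1 - (ρ : ℂ) * Complex.exp (θ * Complex.I)‖ with hN
  have hNnn : 0 ≤ N := norm_nonneg _
  have hπ : 0 < π := Real.pi_pos
  have htπ : |θ| / π ≤ 1 := by
    rw [div_le_one hπ]; exact hθ
  have hN2 : N ^ 2 = (1 - ρ) ^ 2 + 2 * ρ * (1 - Real.cos θ) := by
    rw [hN, Complex.sq_norm]
    simp [Complex.normSq_apply, Complex.exp_mul_I, Complex.cos_ofReal_re, Complex.sin_ofReal_re]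
    nlinarith [Real.sin_sq_add_cos_sq θ]
  have hhalf : 1 - Real.cos θ = 2 * Real.sin (θ / 2) ^ 2 := by
    have := Real.cos_two_mul (θ / 2)
    have h2 : 2 * (θ / 2) = θ := by ring
    rw [h2] at this
    nlinarith [Real.sin_sq_add_cos_sq (θ / 2)]
  have hjordan : (|θ| / π) ^ 2 ≤ Real.sin (θ / 2) ^ 2 := by
    have h1' : Real.sin (θ / 2) ^ 2 = Real.sin (|θ| / 2) ^ 2 := by
      rcases abs_cases θ with ⟨h, _⟩ | ⟨h, _⟩
      · rw [h]
      · rw [h]; simp [neg_div, Real.sin_neg]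
    rw [h1']
    have hle : 2 / π * (|θ| / 2) ≤ Real.sin (|θ| / 2) :=
      Real.mul_le_sin (by positivity) (by linarith)
    have heq : 2 / π * (|θ| / 2) = |θ| / π := by field_simp
    rw [heq] at hle
    exact pow_le_pow_left₀ (by positivity) hle 2
  rcases le_or_gt ρ (1/2 : ℝ) with hρ | hρ
  · -- small ρ : N ≥ 1 - ρ ≥ 1/2
    have hre : (1 - (ρ : ℂ) * Complex.exp (θ * Complex.I)).re = 1 - ρ * Real.cos θ := by
      simp [Complex.exp_mul_I, Complex.cos_ofReal_re, Complex.sin_ofReal_re]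
    have hNge : 1 - ρ ≤ N := by
      have := Complex.abs_re_le_norm (1 - (ρ : ℂ) * Complex.exp (θ * Complex.I))
      rw [hre] at this
      have h2 : 1 - ρ ≤ |1 - ρ * Real.cos θ| := by
        have : ρ * Real.cos θ ≤ ρ := by nlinarith [Real.cos_le_one θ]
        rw [abs_of_nonneg (by nlinarith [Real.neg_one_le_cos θ])]
        linarith
      rw [hN]
      linarith
    nlinarith
  · -- large ρ
    have key : ((1 - ρ) + |θ| / π) ^ 2 ≤ (4 * N) ^ 2 := by
      have h2 : N ^ 2 ≥ (1 - ρ) ^ 2 + 2 * (|θ| / π) ^ 2 := by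
        rw [hN2, hhalf]; nlinarith
      nlinarith [sq_nonneg ((1 - ρ) - |θ| / π), abs_nonneg θ]
    have := (pow_le_pow_iff_left₀ (by nlinarith [div_nonneg (abs_nonneg θ) hπ.le]) (by linarith) two_ne_zero).1 key
    linarith
open Real intervalIntegral

lemma lemA {b A : ℝ} (hb : 1 < b) (hA : 0 < A) :
    ∫ θ in (-π)..π, (A + |θ| / π) ^ (-b) ≤ 2 * π / (b - 1) * A ^ (1 - b) := by
  have hπ : 0 < π := Real.pi_pos
  have hcont : Continuous fun θ : ℝ => (A + |θ| / π) ^ (-b) := by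
    apply Continuous.rpow_const (by continuity)
    intro x
    left
    positivity
  have hint : ∀ u v : ℝ, IntervalIntegrable (fun θ : ℝ => (A + |θ| / π) ^ (-b))
      MeasureTheory.volume u v := fun u v => hcont.intervalIntegrable u v
  -- value of the right half integral
  have hcont' : ContinuousOn (fun θ : ℝ => (A + θ / π) ^ (-b)) (Set.uIcc 0 π) := by
    apply ContinuousOn.rpow_const (Continuous.continuousOn (by continuity))
    intro x hx
    left
    rw [Set.uIcc_of_le hπ.le] at hx
    have := hx.1
    positivity
  have hderiv : ∀ θ ∈ Set.uIcc (0:ℝ) π,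
      HasDerivAt (fun t : ℝ => π / (1 - b) * (A + t / π) ^ (1 - b)) ((A + θ / π) ^ (-b)) θ := by
    intro θ hθ
    rw [Set.uIcc_of_le hπ.le] at hθ
    have hpos : 0 < A + θ / π := by
      have := hθ.1
      positivity
    have h1 : HasDerivAt (fun t : ℝ => A + t / π) (1 / π) θ :=
      ((hasDerivAt_id θ).div_const π).const_add A
    have h2 : HasDerivAt (fun y : ℝ => y ^ (1 - b)) ((1 - b) * (A + θ / π) ^ (1 - b - 1))
        (A + θ / π) := Real.hasDerivAt_rpow_const (Or.inl hpos.ne')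
    have h3 := (h2.comp θ h1).const_mul (π / (1 - b))
    refine h3.congr_deriv ?_
    have hb1 : (1:ℝ) - b ≠ 0 := by linarith
    have : 1 - b - 1 = -b := by ring
    rw [this]
    field_simp
  have hval : ∫ θ in (0:ℝ)..π, (A + θ / π) ^ (-b)
      = π / (1 - b) * (A + 1) ^ (1 - b) - π / (1 - b) * A ^ (1 - b) := by
    rw [integral_eq_sub_of_hasDerivAt hderiv hcont'.intervalIntegrable]
    rw [div_self hπ.ne']
    simp
  -- split the integral
  have hsplit : ∫ θ in (-π)..π, (A + |θ| / π) ^ (-b)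
      = (∫ θ in (-π)..(0:ℝ), (A + |θ| / π) ^ (-b)) + ∫ θ in (0:ℝ)..π, (A + |θ| / π) ^ (-b) :=
    (integral_add_adjacent_intervals (hint _ _) (hint _ _)).symm
  have hright : ∫ θ in (0:ℝ)..π, (A + |θ| / π) ^ (-b) = ∫ θ in (0:ℝ)..π, (A + θ / π) ^ (-b) := by
    apply integral_congr
    intro x hx
    rw [Set.uIcc_of_le hπ.le] at hx
    simp [abs_of_nonneg hx.1]
  have hleft : ∫ θ in (-π)..(0:ℝ), (A + |θ| / π) ^ (-b) = ∫ θ in (0:ℝ)..π, (A + θ / π) ^ (-b) := by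
    have h1 : ∫ θ in (-π)..(0:ℝ), (A + |θ| / π) ^ (-b)
        = ∫ θ in (-π)..(0:ℝ), (A + (-θ) / π) ^ (-b) := by
      apply integral_congr
      intro x hx
      rw [Set.uIcc_of_le (by linarith : -π ≤ (0:ℝ))] at hx
      simp [abs_of_nonpos hx.2]
    rw [h1]
    have := integral_comp_neg (a := -π) (b := 0) (fun θ : ℝ => (A + θ / π) ^ (-b))
    simpa using this
  rw [hsplit, hright, hleft, hval]
  have hAb : 0 ≤ (A + 1) ^ (1 - b) := Real.rpow_nonneg (by linarith) _
  have hb1 : (0:ℝ) < b - 1 := by linarith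
  have key : π / (1 - b) = -(π / (b - 1)) := by
    rw [show (1 - b : ℝ) = -(b - 1) by ring, div_neg]
  rw [key, show (2 * π / (b - 1) : ℝ) = 2 * (π / (b - 1)) by ring]
  have hposc : (0:ℝ) < π / (b - 1) := by positivity
  nlinarith [mul_nonneg hposc.le hAb]
open Real
open scoped ENNReal NNReal

lemma lemC {R : ℝ} (hR : 0 < R) (a : ℕ → ℂ)
    (hsum : ∀ z : ℂ, ‖z‖ < R → Summable fun n : ℕ => a n * z ^ n)
    {r : ℝ} (hr0 : 0 < r) (hrR : r < R) (φ : ℝ → ℝ) (hφ : Continuous φ)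
    (hφb : ∀ θ ∈ Set.uIcc (-π) π, ‖∑' m : ℕ, a m * (circleMap 0 r θ) ^ m‖ ≤ φ θ) (n : ℕ) :
    ‖a n‖ ≤ ((2 * π)⁻¹ * ∫ θ in (-π)..π, φ θ) * (r⁻¹) ^ n := by
  set p := FormalMultilinearSeries.ofScalars ℂ a with hp
  set g := fun z : ℂ => ∑' m : ℕ, a m * z ^ m with hgdef
  have hg : g = p.sum := by
    funext z
    refine tsum_congr fun m => ?_
    rw [hp, FormalMultilinearSeries.ofScalars_apply_eq, smul_eq_mul]
  have hrad : ENNReal.ofReal R ≤ p.radius := by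
    apply ENNReal.le_of_forall_nnreal_lt
    intro t ht
    have ht' : (t : ℝ) < R := by
      rw [← ENNReal.ofReal_coe_nnreal, ENNReal.ofReal_lt_ofReal_iff'] at ht
      exact ht.1
    apply p.le_radius_of_tendsto (l := 0)
    have hs := hsum (t : ℝ) (by simpa using ht')
    have hnorm := hs.tendsto_atTop_zero.norm
    simp only [norm_zero] at hnorm
    convert hnorm using 2 with m
    rw [hp, FormalMultilinearSeries.ofScalars_norm, norm_mul, norm_pow, Complex.norm_real,
      Real.norm_eq_abs, abs_of_nonneg (t.coe_nonneg)]
  have h0R : (0 : ℝ≥0∞) < ENNReal.ofReal R := by simp [hR]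
  have hpb : HasFPowerSeriesOnBall g p 0 (ENNReal.ofReal R) := by
    rw [hg]
    exact (p.hasFPowerSeriesOnBall (lt_of_lt_of_le h0R hrad)).mono h0R hrad
  have hdiff : DifferentiableOn ℂ g (Metric.closedBall 0 r) := by
    have h1 := hpb.differentiableOn
    rw [Metric.emetric_ball] at h1
    exact h1.mono (Metric.closedBall_subset_ball hrR)
  set r' : ℝ≥0 := ⟨r, hr0.le⟩ with hr'
  have hq : HasFPowerSeriesOnBall g (cauchyPowerSeries g 0 r') 0 r' :=
    DifferentiableOn.hasFPowerSeriesOnBall (by exact hdiff) (by exact_mod_cast hr0)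
  have hpq : p = cauchyPowerSeries g 0 r' :=
    hpb.hasFPowerSeriesAt.eq_formalMultilinearSeries hq.hasFPowerSeriesAt
  have han : a n = (cauchyPowerSeries g 0 (r' : ℝ) n) fun _ => 1 := by
    rw [← hpq, hp, FormalMultilinearSeries.ofScalars_apply_eq]
    simp
  have hgc : Continuous fun θ : ℝ => ‖g (circleMap 0 r θ)‖ := by
    refine (hdiff.continuousOn.comp_continuous (continuous_circleMap 0 r) fun θ => ?_).norm
    simp [Metric.mem_closedBall, abs_of_nonneg hr0.le, dist_eq_norm]
  have hIeq : (∫ θ in (0:ℝ)..(2 * π), ‖g (circleMap 0 r θ)‖)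
      = ∫ θ in (-π)..π, ‖g (circleMap 0 r θ)‖ := by
    have hper : Function.Periodic (fun θ : ℝ => ‖g (circleMap 0 r θ)‖) (2 * π) := fun θ => by
      simp [periodic_circleMap 0 r θ]
    have h2 := hper.intervalIntegral_add_eq 0 (-π)
    simpa [show (-π) + 2 * π = π by ring] using h2
  have hImono : (∫ θ in (-π)..π, ‖g (circleMap 0 r θ)‖) ≤ ∫ θ in (-π)..π, φ θ := by
    apply intervalIntegral.integral_mono_on (by linarith [Real.pi_pos])
      (hgc.intervalIntegrable _ _) (hφ.intervalIntegrable _ _)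
    intro θ hθ
    exact hφb θ (by rwa [Set.uIcc_of_le (by linarith [Real.pi_pos])])
  calc ‖a n‖ = ‖(cauchyPowerSeries g 0 (r' : ℝ) n) fun _ => 1‖ := by rw [han]
    _ ≤ ‖cauchyPowerSeries g 0 (r' : ℝ) n‖ * ∏ _i : Fin n, ‖(1 : ℂ)‖ :=
        ContinuousMultilinearMap.le_opNorm _ _
    _ = ‖cauchyPowerSeries g 0 (r' : ℝ) n‖ := by simp
    _ ≤ ((2 * π)⁻¹ * ∫ θ in (0:ℝ)..(2 * π), ‖g (circleMap 0 (r' : ℝ) θ)‖) * |(r' : ℝ)|⁻¹ ^ n :=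
        norm_cauchyPowerSeries_le g 0 (r' : ℝ) n
    _ ≤ ((2 * π)⁻¹ * ∫ θ in (-π)..π, φ θ) * (r⁻¹) ^ n := by
      have hrr : (r' : ℝ) = r := rfl
      rw [hrr, abs_of_nonneg hr0.le, inv_pow, hIeq]
      exact mul_le_mul_of_nonneg_right
        (mul_le_mul_of_nonneg_left hImono (by positivity)) (by positivity)
open scoped ENNReal NNReal


/-- Tauberian lemma. If `f(z) = Σ a_n z^n` converges on `|z| < R` and
`|f(z)| ≤ K1 / (|1 - z/R|^b (1 - |z|/R)^c)` there, then
`|a_n| ≤ K1 K2 n^{b+c-1} R^{-n}`, with `K2` depending only on `b` and `c`. -/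
theorem statement2 (b c : ℝ) (hb : 1 < b) (hc : 0 ≤ c) :
    ∃ K2 : ℝ, 0 < K2 ∧
      ∀ R K1 : ℝ, 0 < R → 0 ≤ K1 →
        ∀ a : ℕ → ℂ,
          (∀ z : ℂ, ‖z‖ < R → Summable (fun n : ℕ => a n * z ^ n)) →
          (∀ z : ℂ, ‖z‖ < R →
            ‖∑' n : ℕ, a n * z ^ n‖ ≤
              K1 / (‖1 - z / (R : ℂ)‖ ^ b * (1 - ‖z‖ / R) ^ c)) →
          ∀ n : ℕ, 1 ≤ n →
            ‖a n‖ ≤ K1 * K2 * (n : ℝ) ^ (b + c - 1) * R ^ (-(n : ℤ)) := by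
  have hπ : (0:ℝ) < π := Real.pi_pos
  refine ⟨3 * 2 ^ (b + c - 1) * 4 ^ b / (b - 1), div_pos (by positivity) (by linarith), ?_⟩
  intro R K1 hR hK1 a hsum hbound n hn
  have hn1 : (1:ℝ) ≤ (n:ℝ) := by exact_mod_cast hn
  have hnpos : (0:ℝ) < (n:ℝ) := by linarith
  set ρ : ℝ := (n:ℝ) / ((n:ℝ) + 1) with hρdef
  have hρ0 : 0 < ρ := by positivity
  have hρ1 : ρ < 1 := by
    rw [hρdef, div_lt_one (by linarith)]; linarith
  set A : ℝ := 1 - ρ with hAdef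
  have hApos : 0 < A := by simp [hAdef]; linarith
  have hAeq : A = ((n:ℝ) + 1)⁻¹ := by
    rw [hAdef, hρdef]; field_simp; ring
  set r : ℝ := R * ρ with hrdef
  have hr0 : 0 < r := by positivity
  have hrR : r < R := by
    rw [hrdef]; nlinarith
  -- the bound function
  set φ : ℝ → ℝ := fun θ => K1 * 4 ^ b * A ^ (-c) * (A + |θ| / π) ^ (-b) with hφdef
  have hφcont : Continuous φ := by
    apply Continuous.mul continuous_const
    apply Continuous.rpow_const (by continuity)
    intro x
    left
    positivity
  -- pointwise bound
  have hφb : ∀ θ ∈ Set.uIcc (-π) π, ‖∑' m : ℕ, a m * (circleMap 0 r θ) ^ m‖ ≤ φ θ := by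
    intro θ hθ
    rw [Set.uIcc_of_le (by linarith)] at hθ
    have hθπ : |θ| ≤ π := abs_le.2 ⟨hθ.1, hθ.2⟩
    set z : ℂ := circleMap 0 r θ with hzdef
    have hznorm : ‖z‖ = r := by
      rw [hzdef]; simp [norm_circleMap_zero, abs_of_nonneg hr0.le]
    have hzR : ‖z‖ < R := by rw [hznorm]; exact hrR
    have h1 := hbound z hzR
    -- identify 1 - z/R with 1 - ρ e^{iθ}
    have hzdiv : (1 : ℂ) - z / (R : ℂ) = 1 - (ρ : ℂ) * Complex.exp (θ * Complex.I) := by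
      rw [hzdef, circleMap]
      push_cast [hrdef]
      have : (R:ℂ) ≠ 0 := by exact_mod_cast hR.ne'
      field_simp
      ring
    have hB := lemB hρ0.le hρ1 hθπ
    rw [← hzdiv] at hB
    set N : ℝ := ‖1 - z / (R:ℂ)‖ with hNdef
    have hNpos : 0 < N := by
      have : 0 < A + |θ| / π := by positivity
      linarith [hB]
    have h1A : 1 - ‖z‖ / R = A := by
      rw [hznorm, hrdef, hAdef]
      field_simp
    rw [h1A] at h1
    -- now h1 : ‖∑'...‖ ≤ K1 / (N^b * A^c)
    refine h1.trans ?_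
    have ht0 : 0 < A + |θ| / π := by positivity
    have hb0 : (0:ℝ) ≤ b := by linarith
    have hNb : ((A + |θ| / π) / 4) ^ b ≤ N ^ b :=
      Real.rpow_le_rpow (by positivity) (by linarith) hb0
    have hden : ((A + |θ| / π) / 4) ^ b * A ^ c ≤ N ^ b * A ^ c :=
      mul_le_mul_of_nonneg_right hNb (Real.rpow_nonneg hApos.le c)
    have hdenpos : 0 < ((A + |θ| / π) / 4) ^ b * A ^ c := by positivity
    have h2 : K1 / (N ^ b * A ^ c) ≤ K1 / (((A + |θ| / π) / 4) ^ b * A ^ c) :=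
      div_le_div_of_nonneg_left hK1 hdenpos hden
    refine h2.trans ?_
    refine le_of_eq ?_
    have haux : ∀ X Y : ℝ, 0 < X → 0 < Y →
        K1 / (X / 4 ^ b * Y) = K1 * 4 ^ b * Y⁻¹ * X⁻¹ := by
      intro X Y hX hY
      have h4b : (0:ℝ) < (4:ℝ) ^ b := Real.rpow_pos_of_pos (by norm_num) b
      field_simp
    rw [hφdef]
    simp only []
    rw [Real.rpow_neg hApos.le, Real.rpow_neg ht0.le,
      Real.div_rpow ht0.le (by norm_num : (0:ℝ) ≤ 4)]
    exact haux _ _ (Real.rpow_pos_of_pos ht0 b) (Real.rpow_pos_of_pos hApos c)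
  have step1 := lemC hR a hsum hr0 hrR φ hφcont hφb n
  have hint : ∫ θ in (-π)..π, φ θ
      = K1 * 4 ^ b * A ^ (-c) * ∫ θ in (-π)..π, (A + |θ| / π) ^ (-b) :=
    intervalIntegral.integral_const_mul _ _
  have hlemA := lemA hb hApos
  have hCpos : (0:ℝ) ≤ K1 * 4 ^ b * A ^ (-c) := by positivity
  have step2 : ∫ θ in (-π)..π, φ θ
      ≤ K1 * 4 ^ b * A ^ (-c) * (2 * π / (b - 1) * A ^ (1 - b)) := by
    rw [hint, mul_comm (2 * π / (b - 1)) (A ^ (1 - b))]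
    refine mul_le_mul_of_nonneg_left ?_ hCpos
    rw [mul_comm (A ^ (1 - b))]
    exact hlemA
  have hb1 : (0:ℝ) < b - 1 := by linarith
  have step3 : ‖a n‖ ≤ K1 * (4 ^ b / (b - 1)) * A ^ (1 - b - c) * (r⁻¹) ^ n := by
    refine step1.trans ?_
    have hmul : ((2 * π)⁻¹ * ∫ θ in (-π)..π, φ θ) * (r⁻¹) ^ n
        ≤ ((2 * π)⁻¹ * (K1 * 4 ^ b * A ^ (-c) * (2 * π / (b - 1) * A ^ (1 - b)))) * (r⁻¹) ^ n :=
      mul_le_mul_of_nonneg_right (mul_le_mul_of_nonneg_left step2 (by positivity)) (by positivity)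
    refine hmul.trans (le_of_eq ?_)
    have hAc2 : A ^ (-c) * A ^ (1 - b) = A ^ (1 - b - c) := by
      rw [← Real.rpow_add hApos]; congr 1; ring
    rw [show (2 * π)⁻¹ * (K1 * 4 ^ b * A ^ (-c) * (2 * π / (b - 1) * A ^ (1 - b)))
        = K1 * (4 ^ b / (b - 1)) * (A ^ (-c) * A ^ (1 - b)) * ((2 * π)⁻¹ * (2 * π)) by ring,
      hAc2, inv_mul_cancel₀ (by positivity : (2 * π : ℝ) ≠ 0), mul_one]
  have hA3 : A ^ (1 - b - c) = ((n:ℝ) + 1) ^ (b + c - 1) := by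
    rw [hAeq, Real.inv_rpow (by positivity), ← Real.rpow_neg (by positivity)]
    congr 1; ring
  have hA4 : ((n:ℝ) + 1) ^ (b + c - 1) ≤ 2 ^ (b + c - 1) * (n:ℝ) ^ (b + c - 1) := by
    rw [← Real.mul_rpow (by norm_num) hnpos.le]
    exact Real.rpow_le_rpow (by positivity) (by linarith) (by linarith)
  have hρinv : (ρ⁻¹ : ℝ) ^ n ≤ 3 := by
    have h1 : ρ⁻¹ = 1 + 1 / (n:ℝ) := by rw [hρdef]; field_simp
    have h2 : (1 + 1 / (n:ℝ)) ≤ Real.exp (1 / (n:ℝ)) := by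
      have := Real.add_one_le_exp (1 / (n:ℝ)); linarith
    have h3 : (ρ⁻¹ : ℝ) ^ n ≤ (Real.exp (1 / (n:ℝ))) ^ n := by
      rw [h1]; exact pow_le_pow_left₀ (by positivity) h2 n
    have h4 : (Real.exp (1 / (n:ℝ))) ^ n = Real.exp 1 := by
      rw [← Real.exp_nat_mul]
      congr 1
      field_simp
    have h5 : Real.exp 1 ≤ 3 := by
      have := Real.exp_one_lt_d9; linarith
    calc (ρ⁻¹ : ℝ) ^ n ≤ _ := h3
      _ = Real.exp 1 := h4
      _ ≤ 3 := h5
  have hrinv : (r⁻¹ : ℝ) ^ n = (ρ⁻¹) ^ n * (R⁻¹) ^ n := by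
    rw [hrdef, mul_inv, mul_pow, mul_comm]
  have hzpow : R ^ (-(n:ℤ)) = (R⁻¹ : ℝ) ^ n := by
    rw [zpow_neg, zpow_natCast, inv_pow]
  refine step3.trans ?_
  rw [hrinv, hzpow, hA3]
  have hDpos : (0:ℝ) ≤ K1 * (4 ^ b / (b - 1)) :=
    mul_nonneg hK1 (div_nonneg (by positivity) hb1.le)
  have e1 : (ρ⁻¹ : ℝ) ^ n * (R⁻¹) ^ n ≤ 3 * (R⁻¹) ^ n :=
    mul_le_mul_of_nonneg_right hρinv (by positivity)
  calc K1 * (4 ^ b / (b - 1)) * (((n:ℝ) + 1) ^ (b + c - 1)) * ((ρ⁻¹ : ℝ) ^ n * (R⁻¹) ^ n)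
      ≤ K1 * (4 ^ b / (b - 1)) * (2 ^ (b + c - 1) * (n:ℝ) ^ (b + c - 1))
        * ((ρ⁻¹ : ℝ) ^ n * (R⁻¹) ^ n) :=
      mul_le_mul_of_nonneg_right (mul_le_mul_of_nonneg_left hA4 hDpos) (by positivity)
    _ ≤ K1 * (4 ^ b / (b - 1)) * (2 ^ (b + c - 1) * (n:ℝ) ^ (b + c - 1)) * (3 * (R⁻¹) ^ n) :=
      mul_le_mul_of_nonneg_left e1
        (mul_nonneg hDpos (by positivity))
    _ = K1 * (3 * 2 ^ (b + c - 1) * 4 ^ b / (b - 1)) * (n:ℝ) ^ (b + c - 1) * (R⁻¹) ^ n := by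
      ring
end

section
/- Let (a_n)_{n≥0} be a sequence of nonnegative real numbers that is submultiplicative, i.e. a_{n+m} ≤ a_n a_m for all m, n ≥ 0, and let A(z) = Σ_{n≥0} a_n z^n. Then for every n ≥ 1 and all reals z, w with z ≥ w > 0 such that A(w) < ∞, one has a_n ≤ (z^n / w^{2n}) (A(w)/(n+1))². -/
open scoped BigOperators

/-- Hutchcroft's lemma: if `(a_n)` is nonnegative and submultiplicative
with generating function `A(z) = Σ a_n z^n`, then for `n ≥ 1` and `z ≥ w > 0` with
`A(w) < ∞`, one has `a_n ≤ (z^n/w^{2n}) (A(w)/(n+1))²`. -/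
theorem statement5 (a : ℕ → ℝ) (ha : ∀ n, 0 ≤ a n)
    (hsub : ∀ m n : ℕ, a (n + m) ≤ a n * a m) :
    ∀ n : ℕ, 1 ≤ n → ∀ z w : ℝ, 0 < w → w ≤ z →
      Summable (fun k : ℕ => a k * w ^ k) →
      a n ≤ z ^ n / w ^ (2 * n) * ((∑' k : ℕ, a k * w ^ k) / ((n : ℝ) + 1)) ^ 2 := by
  intro n hn z w hw hwz hsum
  have hz : 0 < z := hw.trans_le hwz
  set A := ∑' k : ℕ, a k * w ^ k with hA
  have hterm : ∀ k, 0 ≤ a k * w ^ k := fun k => mul_nonneg (ha k) (pow_nonneg hw.le k)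
  have hAnn : 0 ≤ A := tsum_nonneg hterm
  set S := ∑ k ∈ Finset.range (n + 1), a k * w ^ k with hS
  have hSA : S ≤ A := Summable.sum_le_tsum _ (fun k _ => hterm k) hsum
  have hSnn : 0 ≤ S := Finset.sum_nonneg fun k _ => hterm k
  -- reflection
  have hrefl : ∑ k ∈ Finset.range (n + 1), a (n - k) * w ^ (n - k) = S := by
    rw [hS]
    have := Finset.sum_range_reflect (fun k => a k * w ^ k) (n + 1)
    simpa using this
  -- pointwise lower bound on sqrt products
  have hpt : ∀ k ∈ Finset.range (n + 1),
      Real.sqrt (a n * w ^ n) ≤ Real.sqrt (a k * w ^ k) * Real.sqrt (a (n - k) * w ^ (n - k)) := by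
    intro k hk
    rw [← Real.sqrt_mul (hterm k)]
    apply Real.sqrt_le_sqrt
    have hkn : k ≤ n := Nat.lt_succ_iff.mp (Finset.mem_range.mp hk)
    have hmul : a k * w ^ k * (a (n - k) * w ^ (n - k)) = a k * a (n - k) * w ^ n := by
      rw [mul_mul_mul_comm, ← pow_add, Nat.add_sub_cancel' hkn]
    rw [hmul]
    have han : a n ≤ a k * a (n - k) := by
      have := hsub (n - k) k
      rwa [Nat.add_sub_cancel' hkn] at this
    exact mul_le_mul_of_nonneg_right han (pow_nonneg hw.le n)
  -- key inequality
  have hkey : ((n : ℝ) + 1) * Real.sqrt (a n * w ^ n) ≤ S := by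
    have h1 : ((n : ℝ) + 1) * Real.sqrt (a n * w ^ n)
        ≤ ∑ k ∈ Finset.range (n + 1),
            Real.sqrt (a k * w ^ k) * Real.sqrt (a (n - k) * w ^ (n - k)) := by
      have := Finset.sum_le_sum hpt
      simpa [Finset.sum_const, Finset.card_range, nsmul_eq_mul, add_comm] using this
    have h2 := Real.sum_sqrt_mul_sqrt_le (Finset.range (n + 1))
      (f := fun k => a k * w ^ k) (g := fun k => a (n - k) * w ^ (n - k))
      (fun k => hterm k) (fun k => hterm (n - k))
    rw [hrefl, ← hS, Real.mul_self_sqrt hSnn] at h2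
    exact h1.trans h2
  -- square it
  have hsq : ((n : ℝ) + 1) ^ 2 * (a n * w ^ n) ≤ A ^ 2 := by
    have hnn : 0 ≤ ((n : ℝ) + 1) * Real.sqrt (a n * w ^ n) :=
      mul_nonneg (by positivity) (Real.sqrt_nonneg _)
    have := mul_self_le_mul_self hnn (hkey.trans hSA)
    calc ((n : ℝ) + 1) ^ 2 * (a n * w ^ n)
        = (((n : ℝ) + 1) * Real.sqrt (a n * w ^ n)) * (((n : ℝ) + 1) * Real.sqrt (a n * w ^ n)) := by
          rw [mul_mul_mul_comm, Real.mul_self_sqrt (hterm n)]; ring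
      _ ≤ A * A := this
      _ = A ^ 2 := (sq A).symm
  -- conclude
  have hn1 : (0:ℝ) < ((n : ℝ) + 1) ^ 2 := by positivity
  have hwn : (0:ℝ) < w ^ n := pow_pos hw n
  have step1 : a n ≤ A ^ 2 / (((n : ℝ) + 1) ^ 2 * w ^ n) := by
    rw [le_div_iff₀ (by positivity)]
    calc a n * (((n : ℝ) + 1) ^ 2 * w ^ n) = ((n : ℝ) + 1) ^ 2 * (a n * w ^ n) := by ring
      _ ≤ A ^ 2 := hsq
  refine step1.trans ?_
  rw [div_pow, div_mul_div_comm, div_le_div_iff₀ (by positivity) (by positivity)]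
  have hzw : w ^ n ≤ z ^ n := pow_le_pow_left₀ hw.le hwz n
  calc A ^ 2 * (w ^ (2 * n) * ((n:ℝ) + 1) ^ 2) = (A ^ 2 * (w ^ n * ((n:ℝ)+1)^2)) * w ^ n := by
        rw [two_mul, pow_add]; ring
    _ ≤ (A ^ 2 * (w ^ n * ((n:ℝ)+1)^2)) * z ^ n := by
        apply mul_le_mul_of_nonneg_left hzw; positivity
    _ = z ^ n * A ^ 2 * (((n:ℝ)+1)^2 * w ^ n) := by ring
end

section
/- Let d ≥ 1, let r ≥ 3 be an integer, and let β ∈ [0,1]. For every integer n ≥ 0, c_n^𝕋 ≤ (2d)^n e^{−β(n²/V − n)/2}. -/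
open scoped BigOperators

/-- A unit step in `ℤ^d`: a coordinate direction together with a sign. -/
def wsawStep (d : ℕ) (e : Fin d × Bool) : Fin d → ℤ :=
  fun i => if i = e.1 then (if e.2 then 1 else -1) else 0

/-- The position after `k` steps of the walk on `ℤ^d` with step sequence `s`.
(An `n`-step nearest-neighbour walk on `ℤ^d` started at `0` is the same thing as a
sequence of `n` unit steps.) -/
def wsawPos {d n : ℕ} (s : Fin n → Fin d × Bool) (k : ℕ) : Fin d → ℤ :=
  ∑ j ∈ Finset.univ.filter (fun j : Fin n => (j : ℕ) < k), wsawStep d (s j)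

/-- The weakly self-avoiding walk weight `∏_{0 ≤ s < t ≤ n} (1 + β U_{st}(ω))`
of the `ℤ^d` walk with step sequence `s`. -/
noncomputable def wsawWeight {d : ℕ} (β : ℝ) (n : ℕ) (s : Fin n → Fin d × Bool) : ℝ :=
  ∏ p ∈ (Finset.range (n + 1) ×ˢ Finset.range (n + 1)).filter (fun p => p.1 < p.2),
    (1 + β * (if wsawPos s p.1 = wsawPos s p.2 then (-1 : ℝ) else 0))

/-- The two-point partition function `c_n(x)` on `ℤ^d`. -/
noncomputable def cZx (d : ℕ) (β : ℝ) (n : ℕ) (x : Fin d → ℤ) : ℝ :=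
  ∑ s ∈ Finset.univ.filter (fun s : Fin n → Fin d × Bool => wsawPos s n = x),
    wsawWeight β n s

/-- The partition function `c_n = Σ_x c_n(x)` on `ℤ^d`. -/
noncomputable def cZ (d : ℕ) (β : ℝ) (n : ℕ) : ℝ :=
  ∑ s : Fin n → Fin d × Bool, wsawWeight β n s

/-- The position after `k` steps of the torus walk with step sequence `s`:
the mod-`r` projection of the `ℤ^d` position (for `r ≥ 3`, `n`-step torus walks
started at `0` correspond bijectively to step sequences). -/
def wsawPosT {d : ℕ} (r : ℕ) {n : ℕ} (s : Fin n → Fin d × Bool) (k : ℕ) : Fin d → ZMod r :=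
  fun i => ((wsawPos s k i : ℤ) : ZMod r)

/-- The weakly self-avoiding walk weight of the torus walk with step sequence `s`. -/
noncomputable def wsawWeightT {d : ℕ} (r : ℕ) (β : ℝ) (n : ℕ) (s : Fin n → Fin d × Bool) : ℝ :=
  ∏ p ∈ (Finset.range (n + 1) ×ˢ Finset.range (n + 1)).filter (fun p => p.1 < p.2),
    (1 + β * (if wsawPosT r s p.1 = wsawPosT r s p.2 then (-1 : ℝ) else 0))

/-- The torus partition function `c_n^𝕋`. -/
noncomputable def cT (d r : ℕ) (β : ℝ) (n : ℕ) : ℝ :=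
  ∑ s : Fin n → Fin d × Bool, wsawWeightT r β n s

/-- `μ` is the growth constant: `μ = lim_{n→∞} c_n^{1/n}`. -/
def HasGrowthConst (d : ℕ) (β μ : ℝ) : Prop :=
  Filter.Tendsto (fun n : ℕ => (cZ d β n) ^ ((n : ℝ)⁻¹)) Filter.atTop (nhds μ)

/-- The susceptibility `χ(z)` on `ℤ^d`, for complex `z`. -/
noncomputable def chi (d : ℕ) (β : ℝ) (z : ℂ) : ℂ := ∑' n : ℕ, (cZ d β n : ℂ) * z ^ n

/-- The susceptibility `χ(z)` on `ℤ^d`, for real `z`. -/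
noncomputable def chiR (d : ℕ) (β : ℝ) (z : ℝ) : ℝ := ∑' n : ℕ, cZ d β n * z ^ n

/-- The torus susceptibility `χ^𝕋(z)`, for complex `z`. -/
noncomputable def chiT (d r : ℕ) (β : ℝ) (z : ℂ) : ℂ := ∑' n : ℕ, (cT d r β n : ℂ) * z ^ n

/-- The torus susceptibility `χ^𝕋(z)`, for real `z`. -/
noncomputable def chiTR (d r : ℕ) (β : ℝ) (z : ℝ) : ℝ := ∑' n : ℕ, cT d r β n * z ^ n

/-- The sup norm `‖x‖_∞` of `x ∈ ℤ^d`, as a real number. -/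
noncomputable def nInf {d : ℕ} (x : Fin d → ℤ) : ℝ :=
  ((Finset.univ.sup fun i => (x i).natAbs : ℕ) : ℝ)

/-- `⟨x⟩ = max {1, ‖x‖_∞}`. -/
noncomputable def vee {d : ℕ} (x : Fin d → ℤ) : ℝ := max 1 (nInf x)

/-- The two-point function `G_z(x) = Σ_n c_n(x) z^n` on `ℤ^d`. -/
noncomputable def Gpt (d : ℕ) (β z : ℝ) (x : Fin d → ℤ) : ℝ := ∑' n : ℕ, cZx d β n x * z ^ n

/-- The bubble diagram `B_z = G_z * G_z`. -/
noncomputable def Bpt (d : ℕ) (β z : ℝ) (x : Fin d → ℤ) : ℝ :=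
  ∑' y : Fin d → ℤ, Gpt d β z (x - y) * Gpt d β z y

/-- The triangle diagram `T_z = G_z * G_z * G_z`. -/
noncomputable def Tpt (d : ℕ) (β z : ℝ) (x : Fin d → ℤ) : ℝ :=
  ∑' y : Fin d → ℤ, Bpt d β z (x - y) * Gpt d β z y

/-- The representative in `[-r/2, r/2) ∩ ℤ` of `x ∈ ℤ/rℤ`. -/
def repC (r : ℕ) (x : ZMod r) : ℤ :=
  if 2 * (x.val : ℤ) < (r : ℤ) then (x.val : ℤ) else (x.val : ℤ) - (r : ℤ)

-- counting lemma
lemma count_pairs {α : Type*} [Fintype α] [DecidableEq α] (n : ℕ) (f : ℕ → α) :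
    (n + 1) ^ 2 ≤ Fintype.card α *
      (2 * ((Finset.range (n + 1) ×ˢ Finset.range (n + 1)).filter
        (fun p => p.1 < p.2 ∧ f p.1 = f p.2)).card + (n + 1)) := by
  classical
  set R := Finset.range (n + 1) with hR
  set m : α → ℕ := fun x => (R.filter (fun k => f k = x)).card with hm
  set S := (R ×ˢ R).filter (fun p => f p.1 = f p.2) with hS
  have hsum : ∑ x, m x = n + 1 := by
    have := Finset.card_eq_sum_card_fiberwise (f := f) (s := R) (t := Finset.univ)
      (fun k _ => Finset.mem_univ (f k))
    simpa [hR] using this.symm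
  have hfib : ∀ x : α, (S.filter (fun p => f p.1 = x)) =
      (R.filter (fun k => f k = x)) ×ˢ (R.filter (fun k => f k = x)) := by
    intro x
    ext ⟨a, b⟩
    simp only [hS, Finset.mem_filter, Finset.mem_product]
    constructor
    · rintro ⟨⟨⟨ha, hb⟩, hab⟩, hx⟩
      exact ⟨⟨ha, hx⟩, hb, hab ▸ hx⟩
    · rintro ⟨⟨ha, hx⟩, hb, hx'⟩
      exact ⟨⟨⟨ha, hb⟩, hx.trans hx'.symm⟩, hx⟩
  have hsq : ∑ x, m x ^ 2 = S.card := by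
    have := Finset.card_eq_sum_card_fiberwise (f := fun p : ℕ × ℕ => f p.1) (s := S)
      (t := Finset.univ) (fun p _ => Finset.mem_univ _)
    rw [this]
    refine (Finset.sum_congr rfl fun x _ => ?_).symm
    rw [hfib x, Finset.card_product, hm, sq]
  -- split S into diagonal, strictly upper, strictly lower
  have hsplit : S.card = 2 * ((R ×ˢ R).filter (fun p => p.1 < p.2 ∧ f p.1 = f p.2)).card
      + (n + 1) := by
    have h1 : S.card = (S.filter (fun p => p.1 < p.2)).card
        + (S.filter (fun p => ¬ p.1 < p.2)).card :=
      (Finset.card_filter_add_card_filter_not _).symm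
    have h2 : (S.filter (fun p => ¬ p.1 < p.2)).card
        = (S.filter (fun p => p.2 < p.1)).card + (S.filter (fun p => p.1 = p.2)).card := by
      have hU : S.filter (fun p => ¬ p.1 < p.2)
          = S.filter (fun p => p.2 < p.1) ∪ S.filter (fun p => p.1 = p.2) := by
        ext p
        simp only [Finset.mem_filter, Finset.mem_union]
        constructor
        · rintro ⟨h, h'⟩
          rcases Nat.lt_or_ge p.2 p.1 with hh | hh
          · exact Or.inl ⟨h, hh⟩
          · exact Or.inr ⟨h, by omega⟩
        · rintro (⟨h, hh⟩ | ⟨h, hh⟩) <;> exact ⟨h, by omega⟩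
      have hdisj : Disjoint (S.filter (fun p => p.2 < p.1)) (S.filter (fun p => p.1 = p.2)) := by
        rw [Finset.disjoint_left]
        intro p hp hq
        simp only [Finset.mem_filter] at hp hq
        omega
      rw [hU, Finset.card_union_of_disjoint hdisj]
    have hupper : S.filter (fun p => p.1 < p.2)
        = (R ×ˢ R).filter (fun p => p.1 < p.2 ∧ f p.1 = f p.2) := by
      rw [hS, Finset.filter_filter]
      congr 1
      ext p
      tauto
    have hswap : (S.filter (fun p => p.2 < p.1)).card
        = (S.filter (fun p => p.1 < p.2)).card := by
      apply Finset.card_bij (fun p _ => Prod.swap p)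
      · rintro ⟨a, b⟩ hp
        simp only [hS, Finset.mem_filter, Finset.mem_product] at hp ⊢
        exact ⟨⟨⟨hp.1.1.2, hp.1.1.1⟩, hp.1.2.symm⟩, hp.2⟩
      · rintro ⟨a, b⟩ _ ⟨c, e⟩ _ h
        simpa [Prod.ext_iff, and_comm] using h
      · rintro ⟨a, b⟩ hp
        refine ⟨(b, a), ?_, rfl⟩
        simp only [hS, Finset.mem_filter, Finset.mem_product] at hp ⊢
        exact ⟨⟨⟨hp.1.1.2, hp.1.1.1⟩, hp.1.2.symm⟩, hp.2⟩
    have hdiag : (S.filter (fun p => p.1 = p.2)).card = n + 1 := by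
      rw [← Finset.card_range (n + 1)]
      apply Finset.card_bij (fun p _ => p.1)
      · rintro ⟨a, b⟩ hp
        simp only [hS, Finset.mem_filter, Finset.mem_product] at hp
        simpa [hR] using hp.1.1.1
      · rintro ⟨a, b⟩ hb ⟨c, e⟩ hc h
        simp only [hS, Finset.mem_filter] at hb hc
        simp only at h
        rw [Prod.ext_iff]
        omega
      · intro a ha
        refine ⟨(a, a), ?_, rfl⟩
        simp [hS, hR, Finset.mem_product, Finset.mem_range.mp ha, Nat.lt_succ_iff.mp (Finset.mem_range.mp ha)]
    rw [h1, h2, hswap, hdiag, hupper]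
    ring
  -- Cauchy-Schwarz
  have hfinal : ((n + 1 : ℕ) : ℝ) ^ 2 ≤ ((Fintype.card α * S.card : ℕ) : ℝ) := by
    push_cast
    calc ((n : ℝ) + 1) ^ 2 = (∑ x, (m x : ℝ)) ^ 2 := by
          rw [← Nat.cast_sum, hsum]; push_cast; ring
      _ ≤ ((Finset.univ : Finset α).card : ℝ) * ∑ x, (m x : ℝ) ^ 2 :=
          sq_sum_le_card_mul_sum_sq
      _ = (Fintype.card α : ℝ) * (S.card : ℝ) := by
          rw [Finset.card_univ, ← hsq]; push_cast; ring
  have hnat : (n + 1) ^ 2 ≤ Fintype.card α * S.card := by exact_mod_cast hfinal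
  rw [hsplit] at hnat
  rw [Nat.mul_add] at hnat ⊢
  exact hnat

/-- the crude bound `c_n^𝕋 ≤ (2d)^n e^{-β(n²/V - n)/2}`. -/
theorem statement6 (d r : ℕ) (hd : 1 ≤ d) (hr : 3 ≤ r) (β : ℝ) (hβ0 : 0 ≤ β) (hβ1 : β ≤ 1)
    (n : ℕ) :
    cT d r β n ≤ (2 * (d : ℝ)) ^ n * Real.exp (-β * ((n : ℝ) ^ 2 / (r : ℝ) ^ d - n) / 2) := by
  classical
  have hrpos : (0 : ℝ) < (r : ℝ) ^ d := by positivity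
  haveI : NeZero r := ⟨by omega⟩
  have hVnat : Fintype.card (Fin d → ZMod r) = r ^ d := by
    simp [Fintype.card_fun, ZMod.card]
  -- per-walk bound
  have hweight : ∀ s : Fin n → Fin d × Bool,
      wsawWeightT r β n s ≤ Real.exp (-β * ((n : ℝ) ^ 2 / (r : ℝ) ^ d - n) / 2) := by
    intro s
    set P := (Finset.range (n + 1) ×ˢ Finset.range (n + 1)).filter
      (fun p : ℕ × ℕ => p.1 < p.2) with hP
    set f : ℕ → (Fin d → ZMod r) := fun k => wsawPosT r s k with hf
    set N := (P.filter (fun p => f p.1 = f p.2)).card with hN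
    -- step 1: weight ≤ exp (-β N)
    have h1 : wsawWeightT r β n s ≤ Real.exp (-β * N) := by
      have hle : wsawWeightT r β n s
          ≤ ∏ p ∈ P, Real.exp (-β * (if f p.1 = f p.2 then (1 : ℝ) else 0)) := by
        apply Finset.prod_le_prod
        · intro p _
          split_ifs with h
          · nlinarith
          · norm_num
        · intro p _
          split_ifs with h
          · have := Real.add_one_le_exp (-β)
            simp only [mul_one, mul_neg]
            linarith
          · simp
      refine hle.trans ?_
      rw [← Real.exp_sum]
      apply le_of_eq
      congr 1
      rw [← Finset.sum_filter_add_sum_filter_not P (fun p => f p.1 = f p.2)]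
      have e1 : ∑ p ∈ P.filter (fun p => f p.1 = f p.2),
          (-β * (if f p.1 = f p.2 then (1:ℝ) else 0)) = -β * N := by
        rw [Finset.sum_congr rfl (fun p hp => by
          rw [if_pos (Finset.mem_filter.mp hp).2, mul_one])]
        simp [hN, mul_comm]
      have e2 : ∑ p ∈ P.filter (fun p => ¬ f p.1 = f p.2),
          (-β * (if f p.1 = f p.2 then (1:ℝ) else 0)) = 0 := by
        apply Finset.sum_eq_zero
        intro p hp
        rw [if_neg (Finset.mem_filter.mp hp).2]
        ring
      rw [e1, e2, add_zero]
    -- step 2: N ≥ (n²/V - n)/2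
    have hcount := count_pairs n f
    rw [hVnat] at hcount
    have hNfilter : (P.filter (fun p => f p.1 = f p.2))
        = (Finset.range (n + 1) ×ˢ Finset.range (n + 1)).filter
          (fun p => p.1 < p.2 ∧ f p.1 = f p.2) := by
      rw [hP, Finset.filter_filter]
    rw [← hNfilter, ← hN] at hcount
    have h2 : ((n : ℝ) ^ 2 / (r : ℝ) ^ d - n) / 2 ≤ (N : ℝ) := by
      rcases le_or_gt n (r ^ d) with hc | hc
      · have : (n : ℝ) ^ 2 / (r : ℝ) ^ d ≤ n := by
          rw [div_le_iff₀ hrpos]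
          have : (n : ℝ) ≤ (r : ℝ) ^ d := by exact_mod_cast hc
          nlinarith [Nat.cast_nonneg (α := ℝ) n]
        have hN0 : (0 : ℝ) ≤ N := Nat.cast_nonneg N
        linarith
      · -- r^d < n, so r^d ≤ 2n+1, nat inequality gives n² ≤ r^d (2N + n)
        have hV2n : r ^ d ≤ 2 * n + 1 := by omega
        have hnat : n ^ 2 ≤ r ^ d * (2 * N + n) := by nlinarith [hcount, hV2n]
        have hreal : (n : ℝ) ^ 2 ≤ (r : ℝ) ^ d * (2 * N + n) := by exact_mod_cast hnat
        rw [div_sub' (ne_of_gt hrpos), div_div, div_le_iff₀ (by linarith)]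
        nlinarith [hreal]
    have h3 : -β * (N : ℝ) ≤ -β * ((n : ℝ) ^ 2 / (r : ℝ) ^ d - n) / 2 := by
      rw [neg_mul, neg_mul, div_eq_mul_inv, neg_mul, neg_le_neg_iff]
      calc β * (((n:ℝ)^2/(r:ℝ)^d - n)) * 2⁻¹ = β * (((n:ℝ)^2/(r:ℝ)^d - n)/2) := by ring
        _ ≤ β * N := mul_le_mul_of_nonneg_left h2 hβ0
    exact h1.trans (Real.exp_le_exp.mpr h3)
  -- sum over all walks
  calc cT d r β n ≤ ∑ _s : Fin n → Fin d × Bool,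
        Real.exp (-β * ((n : ℝ) ^ 2 / (r : ℝ) ^ d - n) / 2) :=
      Finset.sum_le_sum fun s _ => hweight s
    _ = (2 * (d : ℝ)) ^ n * Real.exp (-β * ((n : ℝ) ^ 2 / (r : ℝ) ^ d - n) / 2) := by
      rw [Finset.sum_const, Finset.card_univ, Fintype.card_fun, nsmul_eq_mul]
      congr 1
      simp [Fintype.card_prod, mul_comm]
end

section
/- Let d ≥ 1 and let r ≥ 3 be an integer. For x ∈ 𝕋_r^d let x_r denote the unique representative of x in ([−r/2, r/2) ∩ ℤ)^d, and define the lift of an n-step torus walk ω started at 0 to be the map ω̄ : {0,…,n} → ℤ^d with ω̄(0) = 0 and ω̄(k) = ω̄(k−1) + (ω(k) − ω(k−1))_r for 1 ≤ k ≤ n. Then: (i) the lift is a bijection from the set of n-step torus walks started at 0 onto the set of n-step walks on ℤ^d started at 0; (ii) for every β ∈ [0,1] and every n ≥ 0, c_n^𝕋 ≤ c_n; and (iii) for every β ∈ [0,1] and every n < r, c_n^𝕋 = c_n. -/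
open scoped BigOperators

/-- `ω : {0,…,n} → ℤ^d` is an `n`-step walk started at `0`:
`ω(0) = 0` and each step has `ℓ¹`-norm `1`. -/
def IsWalkZ (d n : ℕ) (ω : Fin (n + 1) → Fin d → ℤ) : Prop :=
  ω 0 = 0 ∧ ∀ i : Fin n, (∑ j, |ω i.succ j - ω i.castSucc j|) = 1

/-- `ω : {0,…,n} → 𝕋_r^d` is an `n`-step torus walk started at `0`:
`ω(0) = 0` and each step is the mod-`r` projection of a vector of `ℓ¹`-norm `1`. -/
def IsWalkT (d r n : ℕ) (ω : Fin (n + 1) → Fin d → ZMod r) : Prop :=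
  ω 0 = 0 ∧ ∀ i : Fin n, ∃ e : Fin d → ℤ, (∑ j, |e j|) = 1 ∧
    ∀ j, ω i.succ j - ω i.castSucc j = (e j : ZMod r)

/-- The lift `ω̄` of a torus walk `ω`: `ω̄(0) = 0` and
`ω̄(k) = ω̄(k-1) + (ω(k) - ω(k-1))_r`, where `x_r ∈ [-r/2, r/2) ∩ ℤ` represents `x`. -/
def liftWalk (d r n : ℕ) (ω : Fin (n + 1) → Fin d → ZMod r) : Fin (n + 1) → Fin d → ℤ :=
  fun k j => ∑ i ∈ Finset.univ.filter (fun i : Fin n => (i : ℕ) < (k : ℕ)),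
    repC r (ω i.succ j - ω i.castSucc j)

lemma s8_filter_lt_succ (n m : ℕ) (hm : m < n) :
    (Finset.univ.filter (fun i : Fin n => (i : ℕ) < m + 1)) =
      insert ⟨m, hm⟩ (Finset.univ.filter (fun i : Fin n => (i : ℕ) < m)) := by
  ext i
  simp [Nat.lt_succ_iff_lt_or_eq, Fin.ext_iff, or_comm]
  omega

lemma s8_tele {M : Type*} [AddCommGroup M] {n : ℕ} (f : Fin (n + 1) → M) (k : Fin (n + 1)) :
    f k = f 0 + ∑ i ∈ Finset.univ.filter (fun i : Fin n => (i : ℕ) < (k : ℕ)),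
      (f i.succ - f i.castSucc) := by
  obtain ⟨m, hm⟩ := k
  induction m with
  | zero => simp [show (⟨0, hm⟩ : Fin (n+1)) = 0 from rfl]
  | succ m ih =>
    have hmn : m < n := Nat.lt_of_succ_lt_succ hm
    have h2 : m < n + 1 := Nat.lt_of_succ_lt hm
    rw [show ((⟨m+1, hm⟩ : Fin (n+1)) : ℕ) = m + 1 from rfl,
      s8_filter_lt_succ n m hmn, Finset.sum_insert (by simp)]
    have hsucc : (⟨m, hmn⟩ : Fin n).succ = ⟨m+1, hm⟩ := rfl
    have hcast : (⟨m, hmn⟩ : Fin n).castSucc = ⟨m, h2⟩ := rfl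
    rw [hsucc, hcast]
    have := ih h2
    rw [show ((⟨m, h2⟩ : Fin (n+1)) : ℕ) = m from rfl] at this
    rw [this]
    abel

lemma s8_repC_cast {r : ℕ} (hr : 3 ≤ r) {m : ℤ} (hm : |m| ≤ 1) :
    repC r ((m : ZMod r)) = m := by
  haveI : NeZero r := ⟨by omega⟩
  have h1 : (-1 : ℤ) ≤ m := by cases abs_le.mp hm; assumption
  have h2 : m ≤ 1 := (abs_le.mp hm).2
  obtain ⟨k, rfl⟩ : ∃ k, r = k + 1 := ⟨r - 1, by omega⟩
  have hk : 2 ≤ k := by omega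
  interval_cases m
  · have h : ((-1 : ℤ) : ZMod (k+1)) = -1 := by push_cast; ring
    have hv : (((-1 : ZMod (k+1)).val : ℤ)) = (k : ℤ) := by rw [ZMod.val_neg_one]
    rw [h]; unfold repC; rw [hv, if_neg (by push_cast; omega)]
    push_cast; ring
  · simp [repC]
  · haveI : Fact (1 < k + 1) := ⟨by omega⟩
    have h : ((1 : ℤ) : ZMod (k+1)) = 1 := by push_cast; ring
    have hv : (((1 : ZMod (k+1)).val : ℤ)) = 1 := by rw [ZMod.val_one]; norm_num
    rw [h]; unfold repC; rw [hv, if_pos (by push_cast; omega)]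

lemma s8_cast_repC {r : ℕ} (hr : r ≠ 0) (x : ZMod r) : ((repC r x : ℤ) : ZMod r) = x := by
  haveI : NeZero r := ⟨hr⟩
  unfold repC
  split <;> push_cast <;> simp [ZMod.natCast_val, ZMod.natCast_self]

lemma s8_abs_le_one {d : ℕ} {e : Fin d → ℤ} (he : (∑ j, |e j|) = 1) (j : Fin d) :
    |e j| ≤ 1 := by
  have h := Finset.single_le_sum (f := fun j => |e j|) (fun _ _ => abs_nonneg _)
    (Finset.mem_univ j)
  simpa [he] using h

lemma s8_liftWalk_step {d r n : ℕ} (ω : Fin (n + 1) → Fin d → ZMod r) (i : Fin n) (j : Fin d) :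
    liftWalk d r n ω i.succ j - liftWalk d r n ω i.castSucc j =
      repC r (ω i.succ j - ω i.castSucc j) := by
  unfold liftWalk
  rw [show ((i.succ : Fin (n+1)) : ℕ) = (i : ℕ) + 1 from rfl,
    show ((i.castSucc : Fin (n+1)) : ℕ) = (i : ℕ) from rfl,
    s8_filter_lt_succ n i i.isLt, Finset.sum_insert (by simp), Fin.eta]
  ring

lemma s8_cast_lift {d r n : ℕ} (hr : r ≠ 0) {ω : Fin (n + 1) → Fin d → ZMod r}
    (hω : IsWalkT d r n ω) (k : Fin (n + 1)) (j : Fin d) :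
    ((liftWalk d r n ω k j : ℤ) : ZMod r) = ω k j := by
  unfold liftWalk
  push_cast
  rw [Finset.sum_congr rfl (fun i _ => s8_cast_repC hr (ω i.succ j - ω i.castSucc j))]
  have := s8_tele (fun k => ω k j) k
  rw [this, hω.1]
  simp

lemma s8_mapsTo {d r n : ℕ} (hr : 3 ≤ r) {ω : Fin (n + 1) → Fin d → ZMod r}
    (hω : IsWalkT d r n ω) : IsWalkZ d n (liftWalk d r n ω) := by
  constructor
  · funext j; simp [liftWalk]
  · intro i
    obtain ⟨e, he1, he2⟩ := hω.2 i
    have hstep : ∀ j, liftWalk d r n ω i.succ j - liftWalk d r n ω i.castSucc j = e j := by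
      intro j
      rw [s8_liftWalk_step, he2 j, s8_repC_cast hr (s8_abs_le_one he1 j)]
    rw [Finset.sum_congr rfl (fun j _ => by rw [hstep j])]
    exact he1

lemma s8_surj {d r n : ℕ} (hr : 3 ≤ r) {ψ : Fin (n + 1) → Fin d → ℤ}
    (hψ : IsWalkZ d n ψ) :
    ∃ ω, IsWalkT d r n ω ∧ liftWalk d r n ω = ψ := by
  refine ⟨fun k j => ((ψ k j : ℤ) : ZMod r), ⟨?_, ?_⟩, ?_⟩
  · funext j
    show ((ψ 0 j : ℤ) : ZMod r) = 0
    rw [hψ.1]; simp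
  · intro i
    exact ⟨fun j => ψ i.succ j - ψ i.castSucc j, hψ.2 i, fun j => by push_cast; ring⟩
  · funext k j
    unfold liftWalk
    have : ∀ i : Fin n, repC r (((ψ i.succ j : ℤ) : ZMod r) - ((ψ i.castSucc j : ℤ) : ZMod r))
        = ψ i.succ j - ψ i.castSucc j := by
      intro i
      rw [show (((ψ i.succ j : ℤ) : ZMod r) - ((ψ i.castSucc j : ℤ) : ZMod r))
        = (((ψ i.succ j - ψ i.castSucc j : ℤ)) : ZMod r) by push_cast; ring]
      exact s8_repC_cast hr (s8_abs_le_one (hψ.2 i) j)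
    rw [Finset.sum_congr rfl (fun i _ => this i)]
    have := s8_tele (fun k => ψ k j) k
    rw [this, hψ.1]
    simp

lemma s8_step_abs {d : ℕ} (e : Fin d × Bool) (i : Fin d) : |wsawStep d e i| ≤ 1 := by
  unfold wsawStep; split_ifs <;> simp

lemma s8_pos_diff {d n : ℕ} (s : Fin n → Fin d × Bool) {a b : ℕ} (hab : a ≤ b) (i : Fin d) :
    |wsawPos s b i - wsawPos s a i| ≤ n := by
  have hsub : (Finset.univ.filter (fun j : Fin n => (j : ℕ) < a)) ⊆
      (Finset.univ.filter (fun j : Fin n => (j : ℕ) < b)) := by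
    intro j hj
    simp only [Finset.mem_filter, Finset.mem_univ, true_and] at hj ⊢
    omega
  have hsum := Finset.sum_sdiff (f := fun j : Fin n => wsawStep d (s j) i) hsub
  have hdiff : wsawPos s b i - wsawPos s a i =
      ∑ j ∈ (Finset.univ.filter (fun j : Fin n => (j : ℕ) < b)) \
        (Finset.univ.filter (fun j : Fin n => (j : ℕ) < a)), wsawStep d (s j) i := by
    have h1 : wsawPos s b i = ∑ j ∈ Finset.univ.filter (fun j : Fin n => (j : ℕ) < b),
        wsawStep d (s j) i := by
      unfold wsawPos; rw [Finset.sum_apply]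
    have h2 : wsawPos s a i = ∑ j ∈ Finset.univ.filter (fun j : Fin n => (j : ℕ) < a),
        wsawStep d (s j) i := by
      unfold wsawPos; rw [Finset.sum_apply]
    rw [h1, h2, ← hsum]; ring
  rw [hdiff]
  calc |∑ j ∈ _, wsawStep d (s j) i| ≤ ∑ j ∈ (Finset.univ.filter (fun j : Fin n => (j : ℕ) < b)) \
        (Finset.univ.filter (fun j : Fin n => (j : ℕ) < a)), |wsawStep d (s j) i| :=
        Finset.abs_sum_le_sum_abs _ _
    _ ≤ ∑ _j ∈ (Finset.univ.filter (fun j : Fin n => (j : ℕ) < b)) \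
        (Finset.univ.filter (fun j : Fin n => (j : ℕ) < a)), 1 :=
        Finset.sum_le_sum (fun j _ => s8_step_abs (s j) i)
    _ ≤ n := by
        simp only [Finset.sum_const, nsmul_eq_mul, mul_one]
        exact_mod_cast Finset.card_le_univ _ |>.trans_eq (by simp)

lemma s8_weight_le {d : ℕ} {r : ℕ} {β : ℝ} (hβ0 : 0 ≤ β) (hβ1 : β ≤ 1) (n : ℕ)
    (s : Fin n → Fin d × Bool) : wsawWeightT r β n s ≤ wsawWeight β n s := by
  apply Finset.prod_le_prod
  · intro p _; split_ifs <;> nlinarith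
  · intro p _
    by_cases hZ : wsawPos s p.1 = wsawPos s p.2
    · have hT : wsawPosT r s p.1 = wsawPosT r s p.2 := by
        funext i; unfold wsawPosT; rw [hZ]
      simp [hZ, hT]
    · simp only [if_neg hZ, mul_zero, add_zero]
      split_ifs <;> nlinarith

lemma s8_weight_eq {d : ℕ} {r : ℕ} {β : ℝ} {n : ℕ} (hn : n < r)
    (s : Fin n → Fin d × Bool) : wsawWeightT r β n s = wsawWeight β n s := by
  unfold wsawWeightT wsawWeight
  apply Finset.prod_congr rfl
  intro p hp
  simp only [Finset.mem_filter, Finset.mem_product, Finset.mem_range] at hp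
  obtain ⟨⟨hp1, hp2⟩, hlt⟩ := hp
  have hiff : (wsawPosT r s p.1 = wsawPosT r s p.2) ↔ (wsawPos s p.1 = wsawPos s p.2) := by
    constructor
    · intro hT
      funext i
      have hcast : ((wsawPos s p.1 i : ℤ) : ZMod r) = ((wsawPos s p.2 i : ℤ) : ZMod r) :=
        congrFun hT i
      have hdvd : (r : ℤ) ∣ (wsawPos s p.2 i - wsawPos s p.1 i) :=
        ((ZMod.intCast_eq_intCast_iff _ _ _).mp hcast).dvd
      have habs : |wsawPos s p.2 i - wsawPos s p.1 i| < (r : ℤ) := by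
        have := s8_pos_diff s (le_of_lt hlt) i
        omega
      have := Int.eq_zero_of_abs_lt_dvd hdvd habs
      omega
    · intro hZ
      funext i; unfold wsawPosT; rw [hZ]
  rw [if_congr hiff rfl rfl]

/-- (i) the lift is a bijection from `n`-step torus walks started at `0`
onto `n`-step `ℤ^d` walks started at `0`; (ii) `c_n^𝕋 ≤ c_n`; (iii) `c_n^𝕋 = c_n` for `n < r`. -/
theorem statement8 (d r : ℕ) (hd : 1 ≤ d) (hr : 3 ≤ r) :
    (∀ n : ℕ,
      Set.BijOn (liftWalk d r n) {ω | IsWalkT d r n ω} {ω | IsWalkZ d n ω}) ∧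
    (∀ β : ℝ, 0 ≤ β → β ≤ 1 → ∀ n : ℕ, cT d r β n ≤ cZ d β n) ∧
    (∀ β : ℝ, 0 ≤ β → β ≤ 1 → ∀ n : ℕ, n < r → cT d r β n = cZ d β n) := by
  have hr0 : r ≠ 0 := by omega
  refine ⟨?_, ?_, ?_⟩
  · intro n
    refine ⟨fun ω hω => s8_mapsTo hr hω, ?_, ?_⟩
    · intro ω hω ω' hω' heq
      funext k j
      have h1 := s8_cast_lift hr0 hω k j
      have h2 := s8_cast_lift hr0 hω' k j
      rw [← h1, ← h2, heq]
    · intro ψ hψ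
      obtain ⟨ω, hω, hlift⟩ := s8_surj hr hψ
      exact ⟨ω, hω, hlift⟩
  · intro β hβ0 hβ1 n
    exact Finset.sum_le_sum (fun s _ => s8_weight_le hβ0 hβ1 n s)
  · intro β hβ0 hβ1 n hn
    exact Finset.sum_congr rfl (fun s _ => s8_weight_eq hn s)
end

section
/- Let d ≥ 1 and M ≥ 1, and let f_0, f_1, …, f_{2M} : ℤ^d → [0,∞) be even functions (f_j(−x) = f_j(x) for all x). For j = 1, …, M let 𝒢_j denote convolution with f_{2j} and ℳ_j denote pointwise multiplication by f_{2j−1}. Then for any k ∈ {0, 1, …, 2M}: ‖𝒢_M ℳ_M ⋯ 𝒢_1 ℳ_1 f_0‖_∞ ≤ ‖f_k‖_∞ · Π_{(j,j')} ‖f_j * f_{j'}‖_∞, where the product runs over the M pairs (j, j') obtained by listing the elements of {0, …, 2M} \ {k} in increasing order and pairing consecutive elements (first with second, third with fourth, and so on). -/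
open scoped BigOperators ENNReal

/-- The iterated operator `𝒢_M ℳ_M ⋯ 𝒢_1 ℳ_1 f_0`, where `ℳ_j` is multiplication by
`f j (2j-1)` and `𝒢_j` is convolution with `f (2j)`; values in `[0,∞]`. -/
noncomputable def opIter (d : ℕ) (f : ℕ → (Fin d → ℤ) → ℝ≥0∞) : ℕ → (Fin d → ℤ) → ℝ≥0∞
  | 0 => f 0
  | (M + 1) => fun x => ∑' y : Fin d → ℤ, f (2 * M + 2) (x - y) * (f (2 * M + 1) y * opIter d f M y)

namespace Statement18Aux

variable {d : ℕ}

lemma conv_comm' (g h : (Fin d → ℤ) → ℝ≥0∞) (x : Fin d → ℤ) :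
    ∑' y : Fin d → ℤ, g (x - y) * h y = ∑' y : Fin d → ℤ, h (x - y) * g y := by
  rw [← Equiv.tsum_eq (Equiv.subLeft x) (fun y => h (x - y) * g y)]
  refine tsum_congr fun y => ?_
  simp [Equiv.subLeft, mul_comm]

lemma conv_shift_le (g h : (Fin d → ℤ) → ℝ≥0∞) (x z : Fin d → ℤ) :
    ∑' y : Fin d → ℤ, g (x - y) * h (y - z) ≤
      ⨆ w : Fin d → ℤ, ∑' u : Fin d → ℤ, h (w - u) * g u := by
  have e1 : ∑' y : Fin d → ℤ, g (x - y) * h (y - z)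
      = ∑' u : Fin d → ℤ, g ((x - z) - u) * h u := by
    rw [← Equiv.tsum_eq (Equiv.addRight z) (fun y => g (x - y) * h (y - z))]
    refine tsum_congr fun u => ?_
    have hxz : x - (u + z) = x - z - u := by abel
    simp [Equiv.addRight, hxz]
  rw [e1, conv_comm']
  exact le_iSup (fun w : Fin d → ℤ => ∑' u : Fin d → ℤ, h (w - u) * g u) (x - z)

lemma pull {ι : Type*} (g c : ι → ℝ≥0∞) (h : ι → ι → ℝ≥0∞) :
    ∑' y, g y * ∑' z, h y z * c z = ∑' z, c z * ∑' y, h y z * g y := by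
  calc ∑' y, g y * ∑' z, h y z * c z
      = ∑' y, ∑' z, g y * (h y z * c z) := by
        refine tsum_congr fun y => ?_
        rw [ENNReal.tsum_mul_left]
    _ = ∑' z, ∑' y, g y * (h y z * c z) := ENNReal.tsum_comm
    _ = ∑' z, c z * ∑' y, h y z * g y := by
        refine tsum_congr fun z => ?_
        rw [← ENNReal.tsum_mul_left]
        refine tsum_congr fun y => ?_
        ring

lemma tail_le (f : ℕ → (Fin d → ℤ) → ℝ≥0∞) :
    ∀ m : ℕ, (∀ i ≤ m, ∀ x : Fin d → ℤ, f (2*i) (-x) = f (2*i) x) →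
    ∑' y : Fin d → ℤ, f (2*m+1) y * opIter d f m y ≤
      ∏ i ∈ Finset.range (m+1),
        ⨆ x : Fin d → ℤ, ∑' y : Fin d → ℤ, f (2*i) (x - y) * f (2*i+1) y
  | 0, hev => by
    have hev0 : ∀ x : Fin d → ℤ, f 0 (-x) = f 0 x := by simpa using hev 0 le_rfl
    have h0 : ∑' y : Fin d → ℤ, f (2*0+1) y * opIter d f 0 y
        = ∑' y : Fin d → ℤ, f (2*0) ((0 : Fin d → ℤ) - y) * f (2*0+1) y := by
      refine tsum_congr fun y => ?_
      show f 1 y * f 0 y = f 0 (0 - y) * f 1 y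
      rw [zero_sub, hev0 y, mul_comm]
    rw [h0, Finset.prod_range_one]
    exact le_iSup (fun x : Fin d → ℤ => ∑' y : Fin d → ℤ, f (2*0) (x - y) * f (2*0+1) y) 0
  | (m+1), hev => by
    have heva : ∀ x : Fin d → ℤ, f (2*m+2) (-x) = f (2*m+2) x := by
      have := hev (m+1) le_rfl
      simpa [Nat.mul_succ] using this
    have key : ∀ z : Fin d → ℤ,
        ∑' y : Fin d → ℤ, f (2*m+2) (y - z) * f (2*m+3) y
          ≤ ⨆ x : Fin d → ℤ, ∑' y : Fin d → ℤ, f (2*m+2) (x - y) * f (2*m+3) y := by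
      intro z
      have e : ∑' y : Fin d → ℤ, f (2*m+2) (y - z) * f (2*m+3) y
          = ∑' y : Fin d → ℤ, f (2*m+2) (z - y) * f (2*m+3) y := by
        refine tsum_congr fun y => ?_
        rw [← heva (z - y), neg_sub]
      rw [e]
      exact le_iSup (fun x : Fin d → ℤ => ∑' y : Fin d → ℤ, f (2*m+2) (x - y) * f (2*m+3) y) z
    have e1 : ∑' y : Fin d → ℤ, f (2*(m+1)+1) y * opIter d f (m+1) y
        = ∑' z : Fin d → ℤ, (f (2*m+1) z * opIter d f m z) *
            ∑' y : Fin d → ℤ, f (2*m+2) (y - z) * f (2*m+3) y := by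
      show ∑' y : Fin d → ℤ, f (2*m+3) y *
          ∑' z : Fin d → ℤ, f (2*m+2) (y - z) * (f (2*m+1) z * opIter d f m z) = _
      exact pull (fun y => f (2*m+3) y) (fun z => f (2*m+1) z * opIter d f m z)
        (fun y z => f (2*m+2) (y - z))
    calc ∑' y : Fin d → ℤ, f (2*(m+1)+1) y * opIter d f (m+1) y
        = _ := e1
      _ ≤ ∑' z : Fin d → ℤ, (f (2*m+1) z * opIter d f m z) *
            (⨆ x : Fin d → ℤ, ∑' y : Fin d → ℤ, f (2*m+2) (x - y) * f (2*m+3) y) :=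
          ENNReal.tsum_le_tsum fun z => mul_le_mul_right (key z) _
      _ = (∑' z : Fin d → ℤ, f (2*m+1) z * opIter d f m z) *
            (⨆ x : Fin d → ℤ, ∑' y : Fin d → ℤ, f (2*m+2) (x - y) * f (2*m+3) y) :=
          ENNReal.tsum_mul_right
      _ ≤ (∏ i ∈ Finset.range (m+1),
            ⨆ x : Fin d → ℤ, ∑' y : Fin d → ℤ, f (2*i) (x - y) * f (2*i+1) y) *
            (⨆ x : Fin d → ℤ, ∑' y : Fin d → ℤ, f (2*m+2) (x - y) * f (2*m+3) y) :=
          mul_le_mul_left (tail_le f m (fun i hi x => hev i (by omega) x)) _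
      _ = ∏ i ∈ Finset.range (m+2),
            ⨆ x : Fin d → ℤ, ∑' y : Fin d → ℤ, f (2*i) (x - y) * f (2*i+1) y := by
          rw [Finset.prod_range_succ
            (fun i => ⨆ x : Fin d → ℤ, ∑' y : Fin d → ℤ, f (2*i) (x - y) * f (2*i+1) y) (m+1)]
          norm_num [Nat.mul_succ]

lemma main_aux (f : ℕ → (Fin d → ℤ) → ℝ≥0∞) :
    ∀ M : ℕ, (∀ j ≤ 2 * M, ∀ x : Fin d → ℤ, f j (-x) = f j x) → ∀ k, k ≤ 2 * M →
    (⨆ x : Fin d → ℤ, opIter d f M x) ≤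
      (⨆ x : Fin d → ℤ, f k x) *
        ∏ i ∈ Finset.range M,
          ⨆ x : Fin d → ℤ, ∑' y : Fin d → ℤ,
            f (if 2 * i < k then 2 * i else 2 * i + 1) (x - y) *
              f (if 2 * i + 1 < k then 2 * i + 1 else 2 * i + 2) y
  | 0, hev, k, hk => by
    interval_cases k
    simp [opIter]
  | (M+1), hev, k, hk => by
    rcases Nat.lt_or_ge k (2*M+1) with hk1 | hk2
    · -- k ≤ 2M
      have hk' : k ≤ 2*M := by omega
      have IH := main_aux f M (fun j hj => hev j (by omega)) k hk'
      rw [Finset.prod_range_succ]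
      simp only [if_neg (by omega : ¬ 2*M < k), if_neg (by omega : ¬ 2*M+1 < k)]
      refine iSup_le fun x => ?_
      have step1 : opIter d f (M+1) x ≤
          ∑' y : Fin d → ℤ, (⨆ z : Fin d → ℤ, opIter d f M z) *
            (f (2*M+2) (x - y) * f (2*M+1) y) := by
        simp only [opIter]
        refine ENNReal.tsum_le_tsum fun y => ?_
        calc f (2*M+2) (x-y) * (f (2*M+1) y * opIter d f M y)
            ≤ f (2*M+2) (x-y) * (f (2*M+1) y * ⨆ z : Fin d → ℤ, opIter d f M z) :=
              mul_le_mul_right (mul_le_mul_right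
                (le_iSup (fun z : Fin d → ℤ => opIter d f M z) y) _) _
          _ = (⨆ z : Fin d → ℤ, opIter d f M z) * (f (2*M+2) (x-y) * f (2*M+1) y) := by ring
      calc opIter d f (M+1) x
          ≤ ∑' y : Fin d → ℤ, (⨆ z : Fin d → ℤ, opIter d f M z) *
              (f (2*M+2) (x - y) * f (2*M+1) y) := step1
        _ = (⨆ z : Fin d → ℤ, opIter d f M z) *
              ∑' y : Fin d → ℤ, f (2*M+2) (x - y) * f (2*M+1) y := ENNReal.tsum_mul_left
        _ = (⨆ z : Fin d → ℤ, opIter d f M z) *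
              ∑' y : Fin d → ℤ, f (2*M+1) (x - y) * f (2*M+2) y := by rw [conv_comm']
        _ ≤ (⨆ z : Fin d → ℤ, opIter d f M z) *
              ⨆ w : Fin d → ℤ, ∑' y : Fin d → ℤ, f (2*M+1) (w - y) * f (2*M+2) y :=
            mul_le_mul_right (le_iSup
              (fun w : Fin d → ℤ => ∑' y : Fin d → ℤ, f (2*M+1) (w - y) * f (2*M+2) y) x) _
        _ ≤ ((⨆ x : Fin d → ℤ, f k x) *
              ∏ i ∈ Finset.range M,
                ⨆ x : Fin d → ℤ, ∑' y : Fin d → ℤ,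
                  f (if 2 * i < k then 2 * i else 2 * i + 1) (x - y) *
                    f (if 2 * i + 1 < k then 2 * i + 1 else 2 * i + 2) y) *
              ⨆ w : Fin d → ℤ, ∑' y : Fin d → ℤ, f (2*M+1) (w - y) * f (2*M+2) y :=
            mul_le_mul_left IH _
        _ = _ := mul_assoc _ _ _
    · rcases Nat.lt_or_ge k (2*M+2) with hk3 | hk4
      · -- k = 2M+1
        have hk' : k = 2*M+1 := by omega
        subst hk'
        rw [Finset.prod_range_succ]
        simp only [if_pos (by omega : 2*M < 2*M+1), if_neg (lt_irrefl (2*M+1))]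
        have hprod : (∏ i ∈ Finset.range M,
              ⨆ x : Fin d → ℤ, ∑' y : Fin d → ℤ,
                f (if 2 * i < 2*M+1 then 2 * i else 2 * i + 1) (x - y) *
                  f (if 2 * i + 1 < 2*M+1 then 2 * i + 1 else 2 * i + 2) y)
            = ∏ i ∈ Finset.range M,
              ⨆ x : Fin d → ℤ, ∑' y : Fin d → ℤ, f (2*i) (x - y) * f (2*i+1) y := by
          refine Finset.prod_congr rfl fun i hi => ?_
          have hi' : i < M := Finset.mem_range.mp hi
          simp only [if_pos (by omega : 2*i < 2*M+1), if_pos (by omega : 2*i+1 < 2*M+1)]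
        rw [hprod]
        have hB : ∀ x : Fin d → ℤ,
            ∑' y : Fin d → ℤ, f (2*M+2) (x - y) * opIter d f M y ≤
            (∏ i ∈ Finset.range M,
              ⨆ x : Fin d → ℤ, ∑' y : Fin d → ℤ, f (2*i) (x - y) * f (2*i+1) y) *
              ⨆ w : Fin d → ℤ, ∑' u : Fin d → ℤ, f (2*M) (w - u) * f (2*M+2) u := by
          obtain _ | m := M
          · intro x
            simp only [Finset.range_zero, Finset.prod_empty, one_mul]
            have e : ∑' y : Fin d → ℤ, f (2*0+2) (x - y) * opIter d f 0 y
                = ∑' y : Fin d → ℤ, f (2*0) (x - y) * f (2*0+2) y := by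
              show ∑' y : Fin d → ℤ, f 2 (x - y) * f 0 y
                  = ∑' y : Fin d → ℤ, f 0 (x - y) * f 2 y
              exact conv_comm' _ _ _
            rw [e]
            exact le_iSup (fun w : Fin d → ℤ =>
              ∑' u : Fin d → ℤ, f (2*0) (w - u) * f (2*0+2) u) x
          · intro x
            have e1 : ∑' y : Fin d → ℤ, f (2*(m+1)+2) (x - y) * opIter d f (m+1) y
                = ∑' z : Fin d → ℤ, (f (2*m+1) z * opIter d f m z) *
                    ∑' y : Fin d → ℤ, f (2*m+2) (y - z) * f (2*(m+1)+2) (x - y) := by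
              simp only [opIter]
              exact pull (fun y => f (2*(m+1)+2) (x - y))
                (fun z => f (2*m+1) z * opIter d f m z)
                (fun y z => f (2*m+2) (y - z))
            have key : ∀ z : Fin d → ℤ,
                ∑' y : Fin d → ℤ, f (2*m+2) (y - z) * f (2*(m+1)+2) (x - y) ≤
                  ⨆ w : Fin d → ℤ, ∑' u : Fin d → ℤ,
                    f (2*(m+1)) (w - u) * f (2*(m+1)+2) u := by
              intro z
              have e : ∑' y : Fin d → ℤ, f (2*m+2) (y - z) * f (2*(m+1)+2) (x - y)
                  = ∑' y : Fin d → ℤ, f (2*(m+1)+2) (x - y) * f (2*m+2) (y - z) :=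
                tsum_congr fun y => mul_comm _ _
              rw [e]
              exact conv_shift_le (f (2*(m+1)+2)) (f (2*m+2)) x z
            calc ∑' y : Fin d → ℤ, f (2*(m+1)+2) (x - y) * opIter d f (m+1) y
                = _ := e1
              _ ≤ ∑' z : Fin d → ℤ, (f (2*m+1) z * opIter d f m z) *
                    ⨆ w : Fin d → ℤ, ∑' u : Fin d → ℤ,
                      f (2*(m+1)) (w - u) * f (2*(m+1)+2) u :=
                  ENNReal.tsum_le_tsum fun z => mul_le_mul_right (key z) _
              _ = (∑' z : Fin d → ℤ, f (2*m+1) z * opIter d f m z) *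
                    ⨆ w : Fin d → ℤ, ∑' u : Fin d → ℤ,
                      f (2*(m+1)) (w - u) * f (2*(m+1)+2) u := ENNReal.tsum_mul_right
              _ ≤ (∏ i ∈ Finset.range (m+1),
                    ⨆ x : Fin d → ℤ, ∑' y : Fin d → ℤ, f (2*i) (x - y) * f (2*i+1) y) *
                    ⨆ w : Fin d → ℤ, ∑' u : Fin d → ℤ,
                      f (2*(m+1)) (w - u) * f (2*(m+1)+2) u :=
                  mul_le_mul_left (tail_le f m (fun i hi x => hev (2*i) (by omega) x)) _
        refine iSup_le fun x => ?_
        have step1 : opIter d f (M+1) x ≤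
            ∑' y : Fin d → ℤ, (⨆ z : Fin d → ℤ, f (2*M+1) z) *
              (f (2*M+2) (x - y) * opIter d f M y) := by
          simp only [opIter]
          refine ENNReal.tsum_le_tsum fun y => ?_
          calc f (2*M+2) (x-y) * (f (2*M+1) y * opIter d f M y)
              ≤ f (2*M+2) (x-y) * ((⨆ z : Fin d → ℤ, f (2*M+1) z) * opIter d f M y) :=
                mul_le_mul_right (mul_le_mul_left
                  (le_iSup (fun z : Fin d → ℤ => f (2*M+1) z) y) _) _
            _ = (⨆ z : Fin d → ℤ, f (2*M+1) z) * (f (2*M+2) (x-y) * opIter d f M y) := by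
                ring
        calc opIter d f (M+1) x
            ≤ ∑' y : Fin d → ℤ, (⨆ z : Fin d → ℤ, f (2*M+1) z) *
                (f (2*M+2) (x - y) * opIter d f M y) := step1
          _ = (⨆ z : Fin d → ℤ, f (2*M+1) z) *
                ∑' y : Fin d → ℤ, f (2*M+2) (x - y) * opIter d f M y := ENNReal.tsum_mul_left
          _ ≤ (⨆ z : Fin d → ℤ, f (2*M+1) z) *
                ((∏ i ∈ Finset.range M,
                  ⨆ x : Fin d → ℤ, ∑' y : Fin d → ℤ, f (2*i) (x - y) * f (2*i+1) y) *
                  ⨆ w : Fin d → ℤ, ∑' u : Fin d → ℤ, f (2*M) (w - u) * f (2*M+2) u) :=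
              mul_le_mul_right (hB x) _
      · -- k = 2M+2
        have hk' : k = 2*M+2 := by omega
        subst hk'
        have hprod : (∏ i ∈ Finset.range (M+1),
              ⨆ x : Fin d → ℤ, ∑' y : Fin d → ℤ,
                f (if 2 * i < 2*M+2 then 2 * i else 2 * i + 1) (x - y) *
                  f (if 2 * i + 1 < 2*M+2 then 2 * i + 1 else 2 * i + 2) y)
            = ∏ i ∈ Finset.range (M+1),
              ⨆ x : Fin d → ℤ, ∑' y : Fin d → ℤ, f (2*i) (x - y) * f (2*i+1) y := by
          refine Finset.prod_congr rfl fun i hi => ?_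
          have hi' : i < M+1 := Finset.mem_range.mp hi
          simp only [if_pos (by omega : 2*i < 2*M+2), if_pos (by omega : 2*i+1 < 2*M+2)]
        rw [hprod]
        refine iSup_le fun x => ?_
        have step1 : opIter d f (M+1) x ≤
            ∑' y : Fin d → ℤ, (⨆ z : Fin d → ℤ, f (2*M+2) z) *
              (f (2*M+1) y * opIter d f M y) := by
          simp only [opIter]
          exact ENNReal.tsum_le_tsum fun y => mul_le_mul_left
            (le_iSup (fun z : Fin d → ℤ => f (2*M+2) z) (x - y)) _
        calc opIter d f (M+1) x
            ≤ ∑' y : Fin d → ℤ, (⨆ z : Fin d → ℤ, f (2*M+2) z) *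
                (f (2*M+1) y * opIter d f M y) := step1
          _ = (⨆ z : Fin d → ℤ, f (2*M+2) z) *
                ∑' y : Fin d → ℤ, f (2*M+1) y * opIter d f M y := ENNReal.tsum_mul_left
          _ ≤ (⨆ z : Fin d → ℤ, f (2*M+2) z) *
                ∏ i ∈ Finset.range (M+1),
                  ⨆ x : Fin d → ℤ, ∑' y : Fin d → ℤ, f (2*i) (x - y) * f (2*i+1) y :=
              mul_le_mul_right (tail_le f M (fun i hi x => hev (2*i) (by omega) x)) _

end Statement18Aux

/-- `‖𝒢_M ℳ_M ⋯ 𝒢_1 ℳ_1 f_0‖_∞ ≤ ‖f_k‖_∞ Π ‖f_j * f_{j'}‖_∞`, where the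
product is over the `M` pairs obtained by pairing consecutive elements of
`{0,…,2M} \ {k}` listed in increasing order (the `i`-th pair being
`(g(2i), g(2i+1))` with `g m = m` if `m < k` and `g m = m + 1` otherwise). -/
theorem statement18 (d M : ℕ) (hd : 1 ≤ d) (hM : 1 ≤ M)
    (f : ℕ → (Fin d → ℤ) → ℝ≥0∞)
    (heven : ∀ j ≤ 2 * M, ∀ x : Fin d → ℤ, f j (-x) = f j x)
    (k : ℕ) (hk : k ≤ 2 * M) :
    (⨆ x : Fin d → ℤ, opIter d f M x) ≤
      (⨆ x : Fin d → ℤ, f k x) *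
        ∏ i ∈ Finset.range M,
          ⨆ x : Fin d → ℤ, ∑' y : Fin d → ℤ,
            f (if 2 * i < k then 2 * i else 2 * i + 1) (x - y) *
              f (if 2 * i + 1 < k then 2 * i + 1 else 2 * i + 2) y :=
  Statement18Aux.main_aux f M heven k hk
end

section
/- Let d ≥ 1, let r ≥ 3 be an integer, and let β ∈ (0,1]. Suppose there exist constants K, α > 0 such that c_n^𝕋 ≤ K μ^n e^{−α n²/V} for all n ≥ 0. Then for every s ∈ ℝ with 1 + s V^{−1/2} > 0, there exists a constant K_s depending only on K, α and s (not on r) such that χ^𝕋(z_c(1 + s V^{−1/2})) ≤ K_s V^{1/2}. -/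
open scoped BigOperators

lemma wsawWeightT_nonneg {d : ℕ} (r : ℕ) {β : ℝ} (hβ0 : 0 ≤ β) (hβ1 : β ≤ 1) (n : ℕ)
    (t : Fin n → Fin d × Bool) : 0 ≤ wsawWeightT r β n t := by
  apply Finset.prod_nonneg
  intro p _
  split_ifs <;> nlinarith

lemma cT_nonneg (d r : ℕ) {β : ℝ} (hβ0 : 0 ≤ β) (hβ1 : β ≤ 1) (n : ℕ) :
    0 ≤ cT d r β n :=
  Finset.sum_nonneg fun t _ => wsawWeightT_nonneg r hβ0 hβ1 n t

lemma cT_one_pos (d r : ℕ) (hd : 1 ≤ d) (hr : 3 ≤ r) (β : ℝ) : 0 < cT d r β 1 := by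
  haveI : Fact (1 < r) := ⟨by omega⟩
  have hwt : ∀ t : Fin 1 → Fin d × Bool, wsawWeightT r β 1 t = 1 := by
    intro t
    have hfil : (Finset.range 2 ×ˢ Finset.range 2).filter (fun p => p.1 < p.2)
        = {((0 : ℕ), (1 : ℕ))} := by decide
    have h0 : wsawPos t 0 = 0 := by
      simp [wsawPos]
    have h1 : wsawPos t 1 = wsawStep d (t 0) := by
      have : (Finset.univ.filter (fun j : Fin 1 => (j : ℕ) < 1)) = Finset.univ := by
        apply Finset.filter_true_of_mem
        intro j _
        omega
      simp [wsawPos, this]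
    have hne : wsawPosT r t 0 ≠ wsawPosT r t 1 := by
      intro h
      have h2 := congrFun h (t 0).1
      simp only [wsawPosT, h0, h1, wsawStep] at h2
      simp only [Pi.zero_apply, Int.cast_zero, if_pos rfl] at h2
      rcases Bool.eq_false_or_eq_true (t 0).2 with hb | hb <;> rw [hb] at h2 <;>
        simp at h2
    show (∏ p ∈ (Finset.range 2 ×ˢ Finset.range 2).filter (fun p => p.1 < p.2),
      (1 + β * (if wsawPosT r t p.1 = wsawPosT r t p.2 then (-1 : ℝ) else 0))) = 1
    rw [hfil, Finset.prod_singleton, if_neg hne]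
    ring
  have hcard : cT d r β 1 = (Fintype.card (Fin 1 → Fin d × Bool) : ℝ) := by
    rw [cT]
    rw [Finset.sum_congr rfl (fun t _ => hwt t)]
    simp
  rw [hcard]
  have : 0 < Fintype.card (Fin 1 → Fin d × Bool) := by
    haveI : Nonempty (Fin d) := ⟨⟨0, hd⟩⟩
    exact Fintype.card_pos
  exact_mod_cast this

set_option maxHeartbeats 1000000 in
/-- if `c_n^𝕋 ≤ K μ^n e^{-α n²/V}` for all `n`, then for every `s` with
`1 + sV^{-1/2} > 0`, `χ^𝕋(z_c(1 + sV^{-1/2})) ≤ K_s V^{1/2}`, with `K_s` depending only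
on `K`, `α` and `s` (not on `r`). -/
theorem statement19 (K α : ℝ) (hK : 0 < K) (hα : 0 < α) (s : ℝ) :
    ∃ Ks : ℝ, 0 < Ks ∧
      ∀ d : ℕ, 1 ≤ d → ∀ β : ℝ, 0 < β → β ≤ 1 →
        ∀ r : ℕ, 3 ≤ r →
          ∀ μ : ℝ, HasGrowthConst d β μ →
            (∀ n : ℕ, cT d r β n ≤ K * μ ^ n * Real.exp (-α * (n : ℝ) ^ 2 / (r : ℝ) ^ d)) →
            0 < 1 + s * (Real.sqrt ((r : ℝ) ^ d))⁻¹ →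
            chiTR d r β (μ⁻¹ * (1 + s * (Real.sqrt ((r : ℝ) ^ d))⁻¹)) ≤
              Ks * Real.sqrt ((r : ℝ) ^ d) := by
  refine ⟨K * Real.exp (s ^ 2 / (2 * α) + α / 8) * (4 / α + 1), by positivity, ?_⟩
  intro d hd β hβ0 hβ1 r hr μ _hgrowth hcT hq
  set V : ℝ := (r : ℝ) ^ d with hVdef
  have hr1 : (1 : ℝ) ≤ (r : ℝ) := by exact_mod_cast Nat.one_le_cast.mpr (by omega : 1 ≤ r)
  have hV1 : (1 : ℝ) ≤ V := one_le_pow₀ hr1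
  have hV0 : (0 : ℝ) < V := lt_of_lt_of_le zero_lt_one hV1
  set sV : ℝ := Real.sqrt V with hsVdef
  have hsV1 : 1 ≤ sV := Real.one_le_sqrt.mpr hV1
  have hsV0 : 0 < sV := lt_of_lt_of_le zero_lt_one hsV1
  have hsVsq : sV ^ 2 = V := Real.sq_sqrt hV0.le
  -- μ > 0
  have hμ0 : 0 < μ := by
    have h1 := hcT 1
    have h2 := cT_one_pos d r hd hr β
    have hE := Real.exp_pos (-α * ((1 : ℕ) : ℝ) ^ 2 / V)
    by_contra hcon
    push_neg at hcon
    have hKμ : K * μ ^ 1 ≤ 0 := by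
      rw [pow_one]
      exact mul_nonpos_of_nonneg_of_nonpos hK.le hcon
    have : K * μ ^ 1 * Real.exp (-α * ((1 : ℕ) : ℝ) ^ 2 / V) ≤ 0 :=
      mul_nonpos_of_nonpos_of_nonneg hKμ (Real.exp_pos _).le
    linarith
  set q : ℝ := 1 + s * sV⁻¹ with hqdef
  set z : ℝ := μ⁻¹ * q with hzdef
  have hz0 : 0 ≤ z := mul_nonneg (inv_nonneg.mpr hμ0.le) hq.le
  set m : ℕ := ⌈sV⌉₊ with hmdef
  have hmR : sV ≤ (m : ℝ) := Nat.le_ceil sV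
  have hmR2 : (m : ℝ) ≤ 2 * sV := by
    have := Nat.ceil_lt_add_one hsV0.le
    linarith
  have hm0 : (0 : ℝ) < (m : ℝ) := lt_of_lt_of_le hsV0 hmR
  set ρ : ℝ := Real.exp (-(α / 2 / (m : ℝ))) with hρdef
  have hρ0 : 0 ≤ ρ := (Real.exp_pos _).le
  have hρ1 : ρ < 1 := by
    rw [hρdef]
    rw [Real.exp_lt_one_iff]
    have : 0 < α / 2 / (m : ℝ) := by positivity
    linarith
  set B : ℝ := K * Real.exp (s ^ 2 / (2 * α) + α / 8) with hBdef
  have hB0 : 0 < B := by positivity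
  -- termwise bound
  have key : ∀ n : ℕ, cT d r β n * z ^ n ≤ B * ρ ^ n := by
    intro n
    have step1 : cT d r β n * z ^ n
        ≤ K * μ ^ n * Real.exp (-α * (n : ℝ) ^ 2 / V) * z ^ n :=
      mul_le_mul_of_nonneg_right (hcT n) (pow_nonneg hz0 n)
    have hμz : μ * z = q := by
      rw [hzdef, ← mul_assoc, mul_inv_cancel₀ hμ0.ne', one_mul]
    have hpow : μ ^ n * z ^ n = q ^ n := by rw [← mul_pow, hμz]
    have step2 : K * μ ^ n * Real.exp (-α * (n : ℝ) ^ 2 / V) * z ^ n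
        = K * Real.exp (-α * (n : ℝ) ^ 2 / V) * q ^ n := by
      rw [← hpow]
      ring
    have hq_exp : q ≤ Real.exp (s * sV⁻¹) := by
      have := Real.add_one_le_exp (s * sV⁻¹)
      rw [hqdef]
      linarith
    have step3 : q ^ n ≤ Real.exp (s * sV⁻¹ * (n : ℝ)) := by
      calc q ^ n ≤ (Real.exp (s * sV⁻¹)) ^ n := pow_le_pow_left₀ hq.le hq_exp n
        _ = Real.exp (s * sV⁻¹ * (n : ℝ)) := by
            rw [← Real.exp_nat_mul]
            ring_nf
    -- exponent inequality
    have hu2 : ((n : ℝ) / sV) ^ 2 = (n : ℝ) ^ 2 / V := by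
      rw [div_pow, hsVsq]
    have h1 : s * ((n : ℝ) / sV) ≤ s ^ 2 / (2 * α) + (α / 2) * ((n : ℝ) ^ 2 / V) := by
      rw [← hu2]
      have heq : s ^ 2 / (2 * α) + (α / 2) * ((n : ℝ) / sV) ^ 2 - s * ((n : ℝ) / sV)
          = (s - α * ((n : ℝ) / sV)) ^ 2 / (2 * α) := by
        field_simp
        ring
      have hnn : 0 ≤ (s - α * ((n : ℝ) / sV)) ^ 2 / (2 * α) :=
        div_nonneg (sq_nonneg _) (by linarith)
      linarith [heq ▸ hnn]
    have hVm : V ≤ (m : ℝ) ^ 2 := by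
      rw [← hsVsq]
      nlinarith
    have ha : (n : ℝ) ^ 2 / (m : ℝ) ^ 2 ≤ (n : ℝ) ^ 2 / V :=
      div_le_div_of_nonneg_left (sq_nonneg _) hV0 hVm
    have hb : (n : ℝ) / (m : ℝ) - 1 / 4 ≤ (n : ℝ) ^ 2 / (m : ℝ) ^ 2 := by
      have hsq := sq_nonneg ((n : ℝ) / (m : ℝ) - 1 / 2)
      have hnm : ((n : ℝ) / (m : ℝ)) ^ 2 = (n : ℝ) ^ 2 / (m : ℝ) ^ 2 := div_pow _ _ 2
      have heq : (n : ℝ) ^ 2 / (m : ℝ) ^ 2 - ((n : ℝ) / (m : ℝ) - 1 / 4)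
          = ((n : ℝ) / (m : ℝ) - 1 / 2) ^ 2 := by
        rw [← hnm]; ring
      linarith [hsq, heq]
    have h2 : (n : ℝ) / (m : ℝ) - 1 / 4 ≤ (n : ℝ) ^ 2 / V := le_trans hb ha
    have h2' : (α / 2) * ((n : ℝ) / (m : ℝ) - 1 / 4) ≤ (α / 2) * ((n : ℝ) ^ 2 / V) :=
      mul_le_mul_of_nonneg_left h2 (by linarith)
    have expo : s * sV⁻¹ * (n : ℝ) + (-α * (n : ℝ) ^ 2 / V)
        ≤ s ^ 2 / (2 * α) + α / 8 + (-(α / 2 / (m : ℝ))) * (n : ℝ) := by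
      have hrw : s * sV⁻¹ * (n : ℝ) = s * ((n : ℝ) / sV) := by ring
      rw [hrw]
      have e1 : -α * (n : ℝ) ^ 2 / V = -(α * ((n : ℝ) ^ 2 / V)) := by ring
      have e2 : (-(α / 2 / (m : ℝ))) * (n : ℝ) = -((α / 2) * ((n : ℝ) / (m : ℝ))) := by ring
      rw [e1, e2]
      linarith [h1, h2']
    calc cT d r β n * z ^ n
        ≤ K * μ ^ n * Real.exp (-α * (n : ℝ) ^ 2 / V) * z ^ n := step1
      _ = K * Real.exp (-α * (n : ℝ) ^ 2 / V) * q ^ n := step2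
      _ ≤ K * Real.exp (-α * (n : ℝ) ^ 2 / V) * Real.exp (s * sV⁻¹ * (n : ℝ)) :=
          mul_le_mul_of_nonneg_left step3 (by positivity)
      _ = K * Real.exp (s * sV⁻¹ * (n : ℝ) + (-α * (n : ℝ) ^ 2 / V)) := by
          rw [Real.exp_add]
          ring
      _ ≤ K * Real.exp (s ^ 2 / (2 * α) + α / 8 + (-(α / 2 / (m : ℝ))) * (n : ℝ)) :=
          mul_le_mul_of_nonneg_left (Real.exp_le_exp.mpr expo) hK.le
      _ = B * ρ ^ n := by
          rw [Real.exp_add, hBdef, hρdef,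
            show (-(α / 2 / (m : ℝ))) * (n : ℝ) = (n : ℝ) * (-(α / 2 / (m : ℝ))) by ring,
            Real.exp_nat_mul]
          ring
  -- summability and summation
  have hsum_g : Summable (fun n : ℕ => B * ρ ^ n) :=
    (summable_geometric_of_lt_one hρ0 hρ1).mul_left B
  have hf_nonneg : ∀ n : ℕ, 0 ≤ cT d r β n * z ^ n := fun n =>
    mul_nonneg (cT_nonneg d r hβ0.le hβ1 n) (pow_nonneg hz0 n)
  have hsum_f : Summable (fun n : ℕ => cT d r β n * z ^ n) :=
    Summable.of_nonneg_of_le hf_nonneg key hsum_g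
  have hchi : chiTR d r β z ≤ ∑' n : ℕ, B * ρ ^ n := by
    rw [chiTR]
    exact Summable.tsum_le_tsum key hsum_f hsum_g
  rw [tsum_mul_left, tsum_geometric_of_lt_one hρ0 hρ1] at hchi
  -- bound (1 - ρ)⁻¹
  have hx0 : (0 : ℝ) < α / 2 / (m : ℝ) := by positivity
  set x : ℝ := α / 2 / (m : ℝ) with hxdef
  have hρx : ρ ≤ (1 + x)⁻¹ := by
    have h1x : x + 1 ≤ Real.exp x := Real.add_one_le_exp x
    rw [hρdef, Real.exp_neg]
    exact inv_anti₀ (by linarith) (by linarith)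
  have hfrac : x / (1 + x) ≤ 1 - ρ := by
    have : 1 - (1 + x)⁻¹ = x / (1 + x) := by
      field_simp
      ring
    linarith [hρx, this.symm.le]
  have hfrac0 : 0 < x / (1 + x) := div_pos hx0 (by linarith)
  have hinv : (1 - ρ)⁻¹ ≤ (m : ℝ) / (α / 2) + 1 := by
    have h1 : (1 - ρ)⁻¹ ≤ (x / (1 + x))⁻¹ := inv_anti₀ hfrac0 hfrac
    have h2 : (x / (1 + x))⁻¹ = (m : ℝ) / (α / 2) + 1 := by
      rw [hxdef]
      field_simp
    linarith [h2 ▸ h1]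
  -- conclude
  have hfinal : B * (1 - ρ)⁻¹ ≤ K * Real.exp (s ^ 2 / (2 * α) + α / 8) * (4 / α + 1) * sV := by
    have hmc : (m : ℝ) / (α / 2) ≤ (4 / α) * sV := by
      rw [div_le_iff₀ (by positivity : (0:ℝ) < α / 2)]
      have e : 4 / α * sV * (α / 2) = 2 * sV := by
        field_simp
        ring
      rw [e]
      exact hmR2
    have h3 : (m : ℝ) / (α / 2) + 1 ≤ (4 / α + 1) * sV := by nlinarith [hmc, hsV1]
    calc B * (1 - ρ)⁻¹ ≤ B * ((m : ℝ) / (α / 2) + 1) :=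
          mul_le_mul_of_nonneg_left hinv hB0.le
      _ ≤ B * ((4 / α + 1) * sV) := mul_le_mul_of_nonneg_left h3 hB0.le
      _ = K * Real.exp (s ^ 2 / (2 * α) + α / 8) * (4 / α + 1) * sV := by
          rw [hBdef]; ring
  have hgoal : K * Real.exp (s ^ 2 / (2 * α) + α / 8) * (4 / α + 1) * sV
      = B * (4 / α + 1) * sV := by rw [hBdef]
  linarith [hchi, hfinal, hgoal]
end
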